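/- arXiv:1302.3078 — 11 statements merged into one kernel-verified Lean document; each statement's English description precedes it below -/
import Mathlib

section
/- Let G be a finite abelian group with |G| > 1. Then m(G,2) = D(G). -/
/-!
A sequence `S` is zero-sum free exactly when `(-σ(S)) · S` is a minimal zero-sum sequence, so
zero-sum free sequences have length `< D(G)`; hence every sequence of length `≥ D(G)` without
the term `0` contains a minimal zero-sum subsequence, necessarily of length `≥ 2`. Conversely,
deleting one term from a minimal zero-sum sequence of length `D(G)` leaves a zero-sum free
sequence of length `D(G) - 1`; such a sequence avoids `0` and repeats each `g` fewer than
`ord(g)` times, yet has no minimal zero-sum subsequence at all.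
-/

/-- A minimal zero-sum sequence over an abelian group: a nonempty zero-sum sequence
no proper nonempty subsequence of which has sum zero. -/
def IsMinZS {G : Type*} [AddCommGroup G] (S : Multiset G) : Prop :=
  S ≠ 0 ∧ S.sum = 0 ∧ ∀ T : Multiset G, T ≤ S → T ≠ 0 → T ≠ S → T.sum ≠ 0

/-- The Davenport constant: the maximal length of a minimal zero-sum sequence. -/
noncomputable def davenport (G : Type*) [AddCommGroup G] : ℕ :=
  sSup { n | ∃ S : Multiset G, IsMinZS S ∧ Multiset.card S = n }

/-- The invariant m(G,t): the smallest ℓ such that every sequence over G∖{0} of length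
at least ℓ with multiplicity of each g at most ord(g) has a minimal zero-sum
subsequence of length at least t. -/
noncomputable def mInv (G : Type*) [AddCommGroup G] [DecidableEq G] (t : ℕ) : ℕ :=
  sInf { ℓ | ∀ S : Multiset G, (∀ g ∈ S, g ≠ 0) →
    (∀ g : G, g ≠ 0 → S.count g ≤ addOrderOf g) → ℓ ≤ Multiset.card S →
    ∃ T, T ≤ S ∧ IsMinZS T ∧ t ≤ Multiset.card T }

def IsZeroSumFree {G : Type*} [AddCommGroup G] (S : Multiset G) : Prop :=
  ∀ T ≤ S, T ≠ 0 → T.sum ≠ 0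

section ZeroSum

variable {G : Type*} [AddCommGroup G]

theorem exists_isMinZS_le {T : Multiset G} (hT0 : T ≠ 0) (hT : T.sum = 0) :
    ∃ U ≤ T, IsMinZS U := by
  induction T using Multiset.strongInductionOn with
  | ih T ih =>
    by_cases hmin : IsMinZS T
    · exact ⟨T, le_rfl, hmin⟩
    · obtain ⟨W, hWT, hW0, hWT', hW⟩ : ∃ W ≤ T, W ≠ 0 ∧ W ≠ T ∧ W.sum = 0 := by
        simpa [IsMinZS, hT0, hT] using hmin
      obtain ⟨U, hUW, hU⟩ := ih W (lt_of_le_of_ne hWT hWT') hW0 hW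
      exact ⟨U, hUW.trans hWT, hU⟩

theorem isMinZS_singleton_zero : IsMinZS ({0} : Multiset G) := by
  refine ⟨Multiset.singleton_ne_zero 0, Multiset.sum_singleton 0, fun T hT hT0 hTne => ?_⟩
  rcases Multiset.le_singleton.mp hT with h | h
  exacts [absurd h hT0, absurd h hTne]

theorem IsMinZS.two_le_card_of_forall_ne_zero {T : Multiset G} (hT : IsMinZS T)
    (h0 : ∀ g ∈ T, g ≠ 0) : 2 ≤ Multiset.card T := by
  have hpos : 0 < Multiset.card T := Multiset.card_pos.mpr hT.1
  by_contra! hlt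
  obtain ⟨a, rfl⟩ := Multiset.card_eq_one.mp (show Multiset.card T = 1 by omega)
  exact h0 a (Multiset.mem_singleton_self a) (by simpa using hT.2.1)

theorem IsMinZS.isZeroSumFree_erase [DecidableEq G] {U : Multiset G} (hU : IsMinZS U) {x : G}
    (hx : x ∈ U) :
    IsZeroSumFree (U.erase x) := fun T hT hT0 =>
  have hTU : T < U := hT.trans_lt (Multiset.erase_lt.mpr hx)
  hU.2.2 T hTU.le hT0 hTU.ne

theorem IsZeroSumFree.isMinZS_cons_neg_sum {S : Multiset G} (hS : IsZeroSumFree S) :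
    IsMinZS (-S.sum ::ₘ S) := by
  classical
  set U := -S.sum ::ₘ S
  have hU : U.sum = 0 := by simp [U]
  refine ⟨Multiset.cons_ne_zero, hU, fun T hTU hT0 hTne hT => ?_⟩
  by_cases hmem : -S.sum ∈ T
  · -- then the complementary subsequence `U - T` avoids that term and is zero-sum too
    obtain ⟨T', rfl⟩ := Multiset.exists_cons_of_mem hmem
    have hsub : U - (-S.sum ::ₘ T') ≤ S := by
      rw [tsub_le_iff_right, Multiset.add_cons]
      exact Multiset.cons_le_cons _ (Multiset.le_add_right S _)
    have hne : U - (-S.sum ::ₘ T') ≠ 0 := fun h =>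
      hTne (le_antisymm hTU (tsub_eq_zero_iff_le.mp h))
    have hsum : (U - (-S.sum ::ₘ T')).sum = 0 := by
      have := congrArg Multiset.sum (tsub_add_cancel_of_le hTU)
      rwa [Multiset.sum_add, hT, add_zero, hU] at this
    exact hS _ hsub hne hsum
  · exact hS T ((Multiset.le_cons_of_notMem hmem).mp hTU) hT0 hT

theorem IsZeroSumFree.zero_notMem {S : Multiset G} (hS : IsZeroSumFree S) : (0 : G) ∉ S :=
  fun h => hS {0} (Multiset.singleton_le.mpr h) (Multiset.singleton_ne_zero 0) (by simp)

theorem IsZeroSumFree.count_lt_addOrderOf [DecidableEq G] {S : Multiset G}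
    (hS : IsZeroSumFree S) {g : G} (hg : IsOfFinAddOrder g) : S.count g < addOrderOf g := by
  by_contra! h
  refine hS _ (Multiset.le_count_iff_replicate_le.mp h) ?_ (by simp)
  exact Multiset.card_pos.mp (by rw [Multiset.card_replicate]; exact hg.addOrderOf_pos)

theorem IsZeroSumFree.card_lt_card [Fintype G] {S : Multiset G} (hS : IsZeroSumFree S) :
    Multiset.card S < Fintype.card G := by
  induction S using Quotient.inductionOn with
  | h l =>
    let prefixSum : Fin (l.length + 1) → G := fun i => (l.take i).sum
    have hinj : Function.Injective prefixSum := by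
      refine Function.Injective.of_lt_imp_ne fun i j hij heq => ?_
      have hij' : (i : ℕ) < j := hij
      set seg := (l.take j).drop i
      have hsplit : (l.take j).sum = (l.take i).sum + seg.sum := by
        have := List.take_append_drop i (l.take j)
        rw [List.take_take, min_eq_left hij'.le] at this
        rw [← List.sum_append, this]
      refine hS seg ?_ ?_ ?_
      · exact Multiset.coe_le.mpr ((List.drop_sublist _ _).trans (List.take_sublist _ _)).subperm
      · rw [Ne, Multiset.coe_eq_zero, ← Ne, ← List.length_pos_iff]
        simp only [seg, List.length_drop, List.length_take]
        omega
      · simpa [prefixSum, heq] using hsplit.symm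
    simpa using Fintype.card_le_of_injective prefixSum hinj

theorem IsMinZS.card_le_card [Fintype G] {U : Multiset G} (hU : IsMinZS U) :
    Multiset.card U ≤ Fintype.card G := by
  classical
  obtain ⟨x, hx⟩ := Multiset.exists_mem_of_ne_zero hU.1
  rw [← Multiset.card_erase_add_one hx]
  exact (hU.isZeroSumFree_erase hx).card_lt_card

end ZeroSum

section Davenport

variable {G : Type*} [AddCommGroup G] [Fintype G]

theorem bddAbove_card_isMinZS :
    BddAbove { n | ∃ S : Multiset G, IsMinZS S ∧ Multiset.card S = n } := by
  refine ⟨Fintype.card G, ?_⟩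
  rintro _ ⟨S, hS, rfl⟩
  exact hS.card_le_card

theorem exists_isMinZS_card_eq_davenport :
    ∃ U : Multiset G, IsMinZS U ∧ Multiset.card U = davenport G := by
  refine Nat.sSup_mem ?_ bddAbove_card_isMinZS
  exact ⟨1, {0}, isMinZS_singleton_zero, rfl⟩

theorem IsMinZS.card_le_davenport {U : Multiset G} (hU : IsMinZS U) :
    Multiset.card U ≤ davenport G :=
  le_csSup bddAbove_card_isMinZS ⟨U, hU, rfl⟩

theorem IsZeroSumFree.card_lt_davenport {S : Multiset G} (hS : IsZeroSumFree S) :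
    Multiset.card S < davenport G := by
  simpa using hS.isMinZS_cons_neg_sum.card_le_davenport

theorem exists_isMinZS_two_le_card_of_davenport_le {S : Multiset G} (h0 : ∀ g ∈ S, g ≠ 0)
    (hS : davenport G ≤ Multiset.card S) :
    ∃ T ≤ S, IsMinZS T ∧ 2 ≤ Multiset.card T := by
  obtain ⟨T, hTS, hT0, hT⟩ : ∃ T ≤ S, T ≠ 0 ∧ T.sum = 0 := by
    by_contra! h
    exact (IsZeroSumFree.card_lt_davenport h).not_ge hS
  obtain ⟨U, hUT, hU⟩ := exists_isMinZS_le hT0 hT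
  have hUS : U ≤ S := hUT.trans hTS
  exact ⟨U, hUS, hU,
    hU.two_le_card_of_forall_ne_zero fun g hg => h0 g (Multiset.mem_of_le hUS hg)⟩

theorem davenport_le_of_forall_exists_isMinZS_le [DecidableEq G] {ℓ : ℕ}
    (h : ∀ S : Multiset G, (∀ g ∈ S, g ≠ 0) →
      (∀ g : G, g ≠ 0 → S.count g ≤ addOrderOf g) → ℓ ≤ Multiset.card S → ∃ T ≤ S, IsMinZS T) :
    davenport G ≤ ℓ := by
  obtain ⟨U, hU, hUcard⟩ := exists_isMinZS_card_eq_davenport (G := G)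
  obtain ⟨x, hx⟩ := Multiset.exists_mem_of_ne_zero hU.1
  have hfree := hU.isZeroSumFree_erase hx
  by_contra! hlt
  obtain ⟨T, hTS, hT⟩ := h (U.erase x)
    (fun g hg h0 => hfree.zero_notMem (h0 ▸ hg))
    (fun g _ => (hfree.count_lt_addOrderOf (isOfFinAddOrder_of_finite g)).le)
    (by have := Multiset.card_erase_add_one hx; omega)
  exact hfree T hTS hT.1 hT.2.1

end Davenport

theorem stmt1_general (G : Type*) [AddCommGroup G] [Fintype G] [DecidableEq G] :
    mInv G 2 = davenport G := by
  have hD : davenport G ∈ { ℓ | ∀ S : Multiset G, (∀ g ∈ S, g ≠ 0) →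
      (∀ g : G, g ≠ 0 → S.count g ≤ addOrderOf g) → ℓ ≤ Multiset.card S →
      ∃ T, T ≤ S ∧ IsMinZS T ∧ 2 ≤ Multiset.card T } :=
    fun S h0 _ hS => exists_isMinZS_two_le_card_of_davenport_le h0 hS
  refine le_antisymm (Nat.sInf_le hD) (le_csInf ⟨_, hD⟩ fun ℓ hℓ => ?_)
  refine davenport_le_of_forall_exists_isMinZS_le fun S h0 hord hS => ?_
  obtain ⟨T, hTS, hT, -⟩ := hℓ S h0 hord hS
  exact ⟨T, hTS, hT⟩

theorem stmt1 (G : Type*) [AddCommGroup G] [Fintype G] [DecidableEq G]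
    (hG : 1 < Fintype.card G) :
    mInv G 2 = davenport G :=
  stmt1_general G
end

section
/- Let G be a finite abelian group with |G| > 1. Then m(G,3) ≤ 2·D(G) − 1, i.e., every sequence S over G∖{0} of length at least 2·D(G) − 1 with v_g(S) ≤ ord(g) for all g has a minimal zero-sum subsequence of length at least 3. -/
section Aux

variable {G : Type*} [AddCommGroup G]

/-- Every nonempty zero-sum multiset contains a minimal zero-sum submultiset. -/
lemma exists_minZS : ∀ (T : Multiset G), T ≠ 0 → T.sum = 0 → ∃ M, M ≤ T ∧ IsMinZS M := by
  intro T
  induction T using Multiset.strongInductionOn with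
  | ih T ih =>
    intro hT hsum
    by_cases h : ∀ T' : Multiset G, T' ≤ T → T' ≠ 0 → T' ≠ T → T'.sum ≠ 0
    · exact ⟨T, le_refl _, hT, hsum, h⟩
    · push_neg at h
      obtain ⟨T', hle, hne, hneT, hs⟩ := h
      obtain ⟨M, hM, hMin⟩ := ih T' (lt_of_le_of_ne hle hneT) hne hs
      exact ⟨M, hM.trans hle, hMin⟩

/-- A minimal zero-sum sequence has length at most |G| (distinct partial sums). -/
lemma IsMinZS.card_le [Fintype G] {S : Multiset G} (hS : IsMinZS S) :
    Multiset.card S ≤ Fintype.card G := by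
  obtain ⟨hne, hsum, hmin⟩ := hS
  have hlS : (S.toList : Multiset G) = S := S.coe_toList
  set l := S.toList with hldef
  have hcard : l.length = Multiset.card S := by
    rw [← hlS]; simp
  have key : ∀ i j : ℕ, i < j → j < l.length →
      (l.take (i+1)).sum ≠ (l.take (j+1)).sum := by
    intro i j hij hjn hEq
    set seg := (l.drop (i+1)).take (j - i) with hseg
    have hsplit : l.take (j+1) = l.take (i+1) ++ seg := by
      have h1 : j + 1 = (i+1) + (j - i) := by omega
      rw [h1, List.take_add]
    have hsum0 : seg.sum = 0 := by
      have h2 := congrArg List.sum hsplit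
      rw [List.sum_append, ← hEq, left_eq_add] at h2
      exact h2
    have hlenseg : seg.length = j - i := by
      simp only [hseg, List.length_take, List.length_drop]
      omega
    have hsub : (seg : Multiset G) ≤ S := by
      rw [← hlS]
      exact Multiset.coe_le.mpr
        (((List.take_sublist _ _).trans (List.drop_sublist _ _)).subperm)
    have hne0 : (seg : Multiset G) ≠ 0 := by
      rw [Ne, Multiset.coe_eq_zero, ← List.length_eq_zero_iff]
      omega
    have hneS : (seg : Multiset G) ≠ S := by
      intro h3
      have h4 : Multiset.card (seg : Multiset G) = Multiset.card S := by rw [h3]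
      simp only [Multiset.coe_card] at h4
      omega
    exact hmin _ hsub hne0 hneS hsum0
  have hinj : Function.Injective (fun i : Fin l.length => (l.take ((i : ℕ)+1)).sum) := by
    intro i j hEq
    rcases lt_trichotomy (i : ℕ) (j : ℕ) with h | h | h
    · exact absurd hEq (key i j h j.isLt)
    · exact Fin.ext h
    · exact absurd hEq.symm (key j i h i.isLt)
  have := Fintype.card_le_of_injective _ hinj
  simpa [hcard] using this

lemma davenport_bddAbove [Fintype G] :
    BddAbove {n | ∃ S : Multiset G, IsMinZS S ∧ Multiset.card S = n} :=
  ⟨Fintype.card G, fun _ ⟨_, hS, hc⟩ => hc ▸ hS.card_le⟩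

lemma two_le_davenport [Fintype G] (hG : 1 < Fintype.card G) : 2 ≤ davenport G := by
  obtain ⟨g, hg⟩ := Fintype.exists_ne_of_one_lt_card hG 0
  have hordpos : 0 < addOrderOf g := addOrderOf_pos g
  have hord1 : addOrderOf g ≠ 1 := fun h => hg (AddMonoid.addOrderOf_eq_one_iff.mp h)
  have hord2 : 2 ≤ addOrderOf g := by omega
  set n := addOrderOf g with hn
  have hMin : IsMinZS (Multiset.replicate n g) := by
    refine ⟨?_, ?_, ?_⟩
    · intro h
      have := congrArg Multiset.card h
      simp at this
      omega
    · rw [Multiset.sum_replicate]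
      exact addOrderOf_nsmul_eq_zero g
    · intro T hle hne hneT hsumT
      have hTg : T = Multiset.replicate (Multiset.card T) g := by
        apply Multiset.eq_replicate_card.mpr
        intro b hb
        have := Multiset.mem_of_le hle hb
        exact Multiset.eq_of_mem_replicate this
      have hsum' : (Multiset.card T) • g = 0 := by
        rw [← Multiset.sum_replicate, ← hTg]; exact hsumT
      have hdvd : n ∣ Multiset.card T := addOrderOf_dvd_iff_nsmul_eq_zero.mpr hsum'
      have hcardle : Multiset.card T ≤ n := by
        have := Multiset.card_le_card hle
        simpa using this
      have hpos : 0 < Multiset.card T := by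
        rcases Nat.eq_zero_or_pos (Multiset.card T) with h | h
        · exact absurd (Multiset.card_eq_zero.mp h) hne
        · exact h
      have : Multiset.card T = n := Nat.le_antisymm hcardle (Nat.le_of_dvd hpos hdvd)
      exact hneT (by rw [hTg, this])
  calc 2 ≤ n := hord2
    _ ≤ davenport G := le_csSup davenport_bddAbove
      ⟨Multiset.replicate n g, hMin, by simp⟩

/-- A zero-sum-free sequence has length at most D(G) - 1. -/
lemma zsf_card_lt [Fintype G] {S : Multiset G}
    (h : ∀ T : Multiset G, T ≤ S → T ≠ 0 → T.sum ≠ 0) :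
    Multiset.card S + 1 ≤ davenport G := by
  classical
  set a := -S.sum with ha
  set M := a ::ₘ S with hM
  have hMin : IsMinZS M := by
    refine ⟨Multiset.cons_ne_zero, by simp [hM, ha], ?_⟩
    intro T hle hne hneT hsumT
    by_cases haT : a ∈ T
    · set T' := T.erase a with hT'
      have hTcons : T = a ::ₘ T' := (Multiset.cons_erase haT).symm
      have hT'S : T' ≤ S := by
        have := Multiset.erase_le_erase a hle
        rwa [hM, Multiset.erase_cons_head] at this
      have hsumT' : T'.sum = S.sum := by
        have : a + T'.sum = 0 := by rw [← Multiset.sum_cons, ← hTcons]; exact hsumT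
        rw [ha] at this
        linear_combination (norm := abel) this
      set R := S - T' with hR
      have hTR : T' + R = S := add_tsub_cancel_of_le hT'S
      have hRsum : R.sum = 0 := by
        have := congrArg Multiset.sum hTR
        rw [Multiset.sum_add, hsumT'] at this
        linear_combination (norm := abel) this
      have hRne : R ≠ 0 := by
        intro h0
        apply hneT
        rw [h0, add_zero] at hTR
        rw [hTcons, hTR, hM]
      exact h R (by rw [← hTR]; exact Multiset.le_add_left _ _) hRne hRsum
    · have hTS : T ≤ S := by
        rw [Multiset.le_iff_count]
        intro b
        have hb := Multiset.count_le_of_le b hle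
        rcases eq_or_ne b a with rfl | hba
        · simp [Multiset.count_eq_zero_of_notMem haT]
        · rwa [hM, Multiset.count_cons_of_ne hba] at hb
      exact h T hTS hne hsumT
  exact le_csSup davenport_bddAbove ⟨M, hMin, by simp [hM]⟩

end Aux

section Main

variable {G : Type*} [AddCommGroup G] [Fintype G] [DecidableEq G]

lemma main_lemma (hG : 1 < Fintype.card G)
    (S : Multiset G) (h0 : ∀ g ∈ S, g ≠ 0)
    (hcnt : ∀ g : G, g ≠ 0 → S.count g ≤ addOrderOf g)
    (hlen : 2 * davenport G - 1 ≤ Multiset.card S) :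
    ∃ T, T ≤ S ∧ IsMinZS T ∧ 3 ≤ Multiset.card T := by
  classical
  by_contra hc
  push_neg at hc
  have hD2 : 2 ≤ davenport G := two_le_davenport hG
  let e := Fintype.equivFin G
  set pos : G → Prop :=
    fun g => S.count (-g) < S.count g ∨ (S.count (-g) = S.count g ∧ e g ≤ e (-g)) with hpos
  set w : G → ℕ :=
    fun g => if g + g = 0 then min (S.count g) 1 else if pos g then S.count g else 0 with hw
  set W : Multiset G := ∑ g : G, Multiset.replicate (w g) g with hWdef
  have hcountW : ∀ g : G, W.count g = w g := by
    intro g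
    rw [hWdef, Multiset.count_sum']
    simp [Multiset.count_replicate]
  have hwle : ∀ g : G, w g ≤ S.count g := by
    intro g
    simp only [hw]
    split
    · exact min_le_left _ _
    · split
      · exact le_refl _
      · exact Nat.zero_le _
  have hWS : W ≤ S := by
    rw [Multiset.le_iff_count]
    intro g
    rw [hcountW]
    exact hwle g
  -- pointwise counting inequality
  have hkey : ∀ g : G, S.count g + S.count (-g) ≤ 2 * (w g + w (-g)) := by
    intro g
    by_cases h2 : g + g = 0
    · have hgg : -g = g := neg_eq_of_add_eq_zero_right h2
      have hcle : S.count g ≤ 2 := by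
        rcases eq_or_ne g 0 with rfl | hg0
        · have : (0 : G) ∉ S := fun h => h0 0 h rfl
          simp [Multiset.count_eq_zero_of_notMem this]
        · have hdvd : addOrderOf g ∣ 2 := by
            apply addOrderOf_dvd_iff_nsmul_eq_zero.mpr
            rw [two_nsmul]; exact h2
          exact le_trans (hcnt g hg0) (Nat.le_of_dvd (by norm_num) hdvd)
      rw [hgg, hw]
      simp only [if_pos h2]
      omega
    · have h2n : -g + -g ≠ 0 := by
        rw [← neg_add]
        exact fun h => h2 (neg_eq_zero.mp h)
      have hng : -(-g) = g := neg_neg g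
      have hnot : ∀ h : G, ¬ pos h → S.count h ≤ S.count (-h) := by
        intro h hnp
        simp only [hpos] at hnp
        push_neg at hnp
        exact hnp.1
      rw [hw]
      simp only [if_neg h2, if_neg h2n]
      by_cases hpg : pos g <;> by_cases hpng : pos (-g)
      · simp only [if_pos hpg, if_pos hpng]; omega
      · simp only [if_pos hpg, if_neg hpng]
        have := hnot (-g) hpng
        rw [hng] at this
        omega
      · simp only [if_neg hpg, if_pos hpng]
        have := hnot g hpg
        omega
      · exfalso
        have h1 := hnot g hpg
        have h2' := hnot (-g) hpng
        rw [hng] at h2'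
        have heq : S.count (-g) = S.count g := le_antisymm h2' h1
        simp only [hpos] at hpg hpng
        push_neg at hpg hpng
        rw [hng] at hpng
        rcases le_total (e g) (e (-g)) with hle | hle
        · exact absurd (hpg.2 heq) (not_lt_of_ge hle)
        · exact absurd (hpng.2 heq.symm) (not_lt_of_ge hle)
  -- sum over univ of counts
  have hcardsum : ∀ T : Multiset G, ∑ g : G, T.count g = Multiset.card T := by
    intro T
    rw [← Multiset.toFinset_sum_count_eq]
    exact (Finset.sum_subset (Finset.subset_univ _)
      (by intro x _ hx; simpa [Multiset.count_eq_zero] using hx)).symm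
  have hnegsum : ∀ f : G → ℕ, ∑ g : G, f (-g) = ∑ g : G, f g := by
    intro f
    have := Equiv.sum_comp (Equiv.neg G) f
    simpa using this
  have hScard : 2 * Multiset.card S ≤ 4 * Multiset.card W := by
    have h1 : ∑ g : G, (S.count g + S.count (-g)) ≤ ∑ g : G, 2 * (w g + w (-g)) :=
      Finset.sum_le_sum (fun g _ => hkey g)
    have h2 : ∑ g : G, (S.count g + S.count (-g)) = 2 * Multiset.card S := by
      rw [Finset.sum_add_distrib, hnegsum (fun g => S.count g), hcardsum]
      ring
    have h3 : ∑ g : G, 2 * (w g + w (-g)) = 4 * Multiset.card W := by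
      rw [← Finset.mul_sum, Finset.sum_add_distrib, hnegsum w]
      have hwW : ∑ g : G, w g = Multiset.card W := by
        rw [← hcardsum W]
        exact Finset.sum_congr rfl (fun g _ => (hcountW g).symm)
      rw [hwW]
      ring
    omega
  -- W is zero-sum free
  have hWzsf : ∀ T : Multiset G, T ≤ W → T ≠ 0 → T.sum ≠ 0 := by
    intro T hle hne hsum
    obtain ⟨M, hMT, hMin⟩ := exists_minZS T hne hsum
    have hMW : M ≤ W := hMT.trans hle
    have hMS : M ≤ S := hMW.trans hWS
    have hM3 : Multiset.card M < 3 := hc M hMS hMin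
    obtain ⟨hMne, hMsum, _⟩ := hMin
    have hM12 : Multiset.card M = 1 ∨ Multiset.card M = 2 := by
      have : Multiset.card M ≠ 0 := by simpa [Multiset.card_eq_zero] using hMne
      omega
    rcases hM12 with h1 | h2cd
    · obtain ⟨a, rfl⟩ := Multiset.card_eq_one.mp h1
      have ha : a ≠ 0 := h0 a (Multiset.mem_of_le hMS (Multiset.mem_singleton_self a))
      simp only [Multiset.sum_singleton] at hMsum
      exact ha hMsum
    · obtain ⟨a, b, rfl⟩ := Multiset.card_eq_two.mp h2cd
      have hab : a + b = 0 := by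
        simpa using hMsum
      have ha0 : a ≠ 0 := h0 a (Multiset.mem_of_le hMS (by simp))
      rcases eq_or_ne a b with rfl | hne'
      · have h2a : a + a = 0 := hab
        have hcnt2 : 2 ≤ W.count a := by
          have h := Multiset.count_le_of_le a hMW
          have : Multiset.count a ({a, a} : Multiset G) = 2 := by
            simp [Multiset.insert_eq_cons]
          omega
        rw [hcountW, hw] at hcnt2
        simp only [if_pos h2a] at hcnt2
        omega
      · have hbna : b = -a := eq_neg_of_add_eq_zero_right hab
        subst hbna
        have h2a : a + a ≠ 0 := by
          intro h
          exact hne' (neg_eq_of_add_eq_zero_right h).symm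
        have h2na : -a + -a ≠ 0 := by
          rw [← neg_add]
          exact fun h => h2a (neg_eq_zero.mp h)
        have haW : 1 ≤ W.count a := by
          apply Multiset.one_le_count_iff_mem.mpr
          exact Multiset.mem_of_le hMW (by simp)
        have hnaW : 1 ≤ W.count (-a) := by
          apply Multiset.one_le_count_iff_mem.mpr
          exact Multiset.mem_of_le hMW (by simp)
        rw [hcountW, hw] at haW hnaW
        simp only [if_neg h2a] at haW
        simp only [if_neg h2na] at hnaW
        have hpa : pos a := by
          by_contra h
          simp [if_neg h] at haW
        have hpna : pos (-a) := by
          by_contra h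
          simp [if_neg h] at hnaW
        simp only [hpos] at hpa hpna
        rw [neg_neg] at hpna
        rcases hpa with h | ⟨heqc, hle⟩ <;> rcases hpna with h' | ⟨heqc', hle'⟩
        · omega
        · omega
        · omega
        · have : e a = e (-a) := le_antisymm hle hle'
          have : a = -a := e.injective this
          exact h2a (by nth_rewrite 2 [this]; abel)
  -- conclude
  have hWbound : Multiset.card W + 1 ≤ davenport G := zsf_card_lt hWzsf
  omega

end Main


theorem stmt2 (G : Type*) [AddCommGroup G] [Fintype G] [DecidableEq G]
    (hG : 1 < Fintype.card G) :
    mInv G 3 ≤ 2 * davenport G - 1 ∧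
    ∀ S : Multiset G, (∀ g ∈ S, g ≠ 0) →
      (∀ g : G, g ≠ 0 → S.count g ≤ addOrderOf g) →
      2 * davenport G - 1 ≤ Multiset.card S →
      ∃ T, T ≤ S ∧ IsMinZS T ∧ 3 ≤ Multiset.card T := by
  refine ⟨Nat.sInf_le ?_, fun S h0 hcnt hlen => main_lemma hG S h0 hcnt hlen⟩
  exact fun S h0 hcnt hlen => main_lemma hG S h0 hcnt hlen
end

section
/- Let G be a finite abelian group with |G| > 1, written G ≅ C_{n_1} ⊕ ⋯ ⊕ C_{n_r} with 1 < n_1 | ⋯ | n_r. Then m(G,3) ≥ 2·D*(G) − 1, where D*(G) = 1 + Σ_{i=1}^r (n_i − 1). Concretely, if (e_1,…,e_r) is a basis of G with ord(e_i) = n_i, then the sequence S = Π_{i=1}^r e_i^{n_i−1} is zero-sum free and (−S)·S has no minimal zero-sum subsequence of length at least 3. -/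
section Aux

variable {G : Type*} [AddCommGroup G] [DecidableEq G] {r : ℕ}

lemma aux_card_sum {ι : Type*} (s : Finset ι) (m : ι → Multiset G) :
    Multiset.card (∑ i ∈ s, m i) = ∑ i ∈ s, Multiset.card (m i) := by
  induction s using Finset.cons_induction with
  | empty => simp
  | cons a s ha ih => simp [Finset.sum_cons, ih]

lemma aux_count (f : Fin r → G) (hf : Function.Injective f) (k : Fin r → ℕ) (j : Fin r) :
    (∑ i, Multiset.replicate (k i) (f i)).count (f j) = k j := by
  rw [Multiset.count_sum', Finset.sum_eq_single j]
  · simp [Multiset.count_replicate]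
  · intro i _ hij
    rw [Multiset.count_replicate, if_neg (hf.ne hij)]
  · simp

lemma aux_count0 (f : Fin r → G) (k : Fin r → ℕ) {g : G} (hg : ∀ i, f i ≠ g) :
    (∑ i, Multiset.replicate (k i) (f i)).count g = 0 := by
  rw [Multiset.count_sum']
  exact Finset.sum_eq_zero fun i _ => by
    rw [Multiset.count_replicate, if_neg (hg i)]

lemma aux_decomp (f : Fin r → G) (hf : Function.Injective f) (k : Fin r → ℕ)
    {T : Multiset G} (hT : T ≤ ∑ i, Multiset.replicate (k i) (f i)) :
    T = ∑ i, Multiset.replicate (T.count (f i)) (f i) := by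
  ext g
  rw [Multiset.count_sum']
  by_cases hg : ∃ j, f j = g
  · obtain ⟨j, rfl⟩ := hg
    rw [Finset.sum_eq_single j]
    · rw [Multiset.count_replicate, if_pos rfl]
    · intro i _ hij
      rw [Multiset.count_replicate, if_neg (hf.ne hij)]
    · simp
  · push_neg at hg
    have h0 : T.count g = 0 :=
      le_antisymm ((aux_count0 f k hg) ▸ Multiset.count_le_of_le g hT) (Nat.zero_le _)
    rw [h0]
    exact (Finset.sum_eq_zero fun i _ => by
      rw [Multiset.count_replicate, if_neg (hg i)]).symm

lemma aux_le (f : Fin r → G) (hf : Function.Injective f) (k : Fin r → ℕ)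
    {T : Multiset G} (hT : T ≤ ∑ i, Multiset.replicate (k i) (f i)) (i : Fin r) :
    T.count (f i) ≤ k i := by
  have := Multiset.count_le_of_le (f i) hT
  rwa [aux_count f hf k i] at this

lemma aux_sum (f : Fin r → G) (hf : Function.Injective f) (k : Fin r → ℕ)
    {T : Multiset G} (hT : T ≤ ∑ i, Multiset.replicate (k i) (f i)) :
    T.sum = ∑ i, (T.count (f i)) • f i := by
  conv_lhs => rw [aux_decomp f hf k hT]
  rw [Multiset.sum_sum]
  simp [Multiset.sum_replicate]

lemma aux_split (T X Y : Multiset G) (h : T ≤ X + Y) :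
    ∃ A B, A ≤ X ∧ B ≤ Y ∧ T = A + B := by
  refine ⟨T ∩ X, T - T ∩ X, Multiset.inter_le_right .., ?_, ?_⟩
  · rw [Multiset.le_iff_count]; intro a
    have h1 := Multiset.count_le_of_le a h
    rw [Multiset.count_add] at h1
    rw [Multiset.count_sub, Multiset.count_inter]
    omega
  · rw [Multiset.ext]; intro a
    rw [Multiset.count_add, Multiset.count_sub, Multiset.count_inter]
    have := Multiset.count_le_of_le a (Multiset.inter_le_left (s := T) (t := X))
    omega

end Aux

theorem stmt3 (G : Type*) [AddCommGroup G] [Fintype G] [DecidableEq G]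
    (hG : 1 < Fintype.card G) (r : ℕ) (n : Fin r → ℕ) (e : Fin r → G)
    (h1 : ∀ i, 1 < n i) (hchain : ∀ i j : Fin r, i ≤ j → n i ∣ n j)
    (hord : ∀ i, addOrderOf (e i) = n i)
    (hindep : ∀ c : Fin r → ℤ, ∑ i, c i • e i = 0 → ∀ i, c i • e i = 0)
    (hspan : ∀ g : G, ∃ c : Fin r → ℤ, g = ∑ i, c i • e i) :
    (∀ T ≤ (∑ i, Multiset.replicate (n i - 1) (e i) : Multiset G),
        T ≠ 0 → T.sum ≠ 0) ∧
    (∀ T ≤ ((∑ i, Multiset.replicate (n i - 1) (e i) : Multiset G).map (fun x => -x) +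
          ∑ i, Multiset.replicate (n i - 1) (e i) : Multiset G),
        IsMinZS T → Multiset.card T < 3) ∧
    2 * (1 + ∑ i, (n i - 1)) - 1 ≤ mInv G 3 := by
  set S : Multiset G := ∑ i, Multiset.replicate (n i - 1) (e i) with hS
  -- basic facts
  have hdvd : ∀ c : Fin r → ℤ, (∑ i, c i • e i) = 0 → ∀ i, (n i : ℤ) ∣ c i := by
    intro c hc i
    have h := hindep c hc i
    exact (hord i) ▸ (addOrderOf_dvd_iff_zsmul_eq_zero.mpr h)
  have hpair : ∀ (a b : ℤ) (i j : Fin r), i ≠ j → a • e i + b • e j = 0 → (n i : ℤ) ∣ a := by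
    intro a b i j hij h
    have hc : ∑ t, ((if t = i then a else if t = j then b else 0) • e t) = 0 := by
      have hcongr : ∀ t ∈ Finset.univ, (if t = i then a else if t = j then b else 0) • e t
          = (if t = i then a • e i else 0) + (if t = j then b • e j else 0) := by
        intro t _
        split_ifs with ht1 ht2 <;> simp_all
      rw [Finset.sum_congr rfl hcongr, Finset.sum_add_distrib,
        Finset.sum_ite_eq', Finset.sum_ite_eq']
      simpa using h
    have := hdvd _ hc i
    simpa using this
  have hne0 : ∀ i, e i ≠ 0 := by
    intro i h
    have := hord i
    rw [h, addOrderOf_zero] at this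
    have := h1 i; omega
  have hinj : Function.Injective e := by
    intro i j hij
    by_contra hne
    have : (1 : ℤ) • e i + (-1 : ℤ) • e j = 0 := by
      simp [hij]
    have hd := hpair 1 (-1) i j hne this
    have h1' : n i = 1 := Nat.dvd_one.mp (Int.ofNat_dvd.mp (by exact_mod_cast hd))
    have := h1 i
    omega
  have hnegne : ∀ i j : Fin r, i ≠ j → -(e i) ≠ e j := by
    intro i j hij h
    have : (1 : ℤ) • e i + (1 : ℤ) • e j = 0 := by
      simp [← h]
    have hd := hpair 1 1 i j hij this
    have h1' : n i = 1 := Nat.dvd_one.mp (Int.ofNat_dvd.mp (by exact_mod_cast hd))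
    have := h1 i
    omega
  have hneginj : Function.Injective (fun i => -(e i)) :=
    fun i j h => hinj (neg_injective h)
  have hself : ∀ i, -(e i) = e i → n i = 2 := by
    intro i h
    have h2 : (2 : ℕ) • e i = 0 := by
      rw [two_nsmul]
      nth_rewrite 1 [← h]
      simp
    have := addOrderOf_dvd_iff_nsmul_eq_zero.mpr h2
    rw [hord i] at this
    have := Nat.le_of_dvd (by norm_num) this
    have := h1 i
    omega
  have hself' : ∀ i, n i = 2 → -(e i) = e i := by
    intro i h
    have h2 : e i + e i = 0 := by
      have := addOrderOf_nsmul_eq_zero (e i)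
      rw [hord i, h, two_nsmul] at this
      exact this
    exact neg_eq_of_add_eq_zero_left h2
  have hSmap : S.map (fun x => -x) = ∑ i, Multiset.replicate (n i - 1) (-(e i)) := by
    rw [hS]
    have : ∀ s : Finset (Fin r), Multiset.map (fun x : G => -x)
        (∑ i ∈ s, Multiset.replicate (n i - 1) (e i))
        = ∑ i ∈ s, Multiset.replicate (n i - 1) (-(e i)) := by
      intro s
      induction s using Finset.cons_induction with
      | empty => simp
      | cons a s ha ih =>
          rw [Finset.sum_cons, Finset.sum_cons, Multiset.map_add, ih, Multiset.map_replicate]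
    exact this _
  -- Part 1
  have part1 : ∀ T ≤ S, T ≠ 0 → T.sum ≠ 0 := by
    intro T hT hT0 habs
    have hsum := aux_sum e hinj (fun i => n i - 1) hT
    have hz : ∑ i, ((T.count (e i) : ℤ)) • e i = 0 := by
      rw [← habs, hsum]
      exact Finset.sum_congr rfl fun i _ => natCast_zsmul _ _
    have hcz : ∀ i, T.count (e i) = 0 := by
      intro i
      have hd : (n i : ℤ) ∣ (T.count (e i) : ℤ) := hdvd _ hz i
      have hd' : n i ∣ T.count (e i) := Int.ofNat_dvd.mp (by exact_mod_cast hd)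
      have hle := aux_le e hinj (fun i => n i - 1) hT i
      have := h1 i
      rcases Nat.eq_zero_or_pos (T.count (e i)) with h0 | hpos
      · exact h0
      · have := Nat.le_of_dvd hpos hd'
        omega
    apply hT0
    rw [aux_decomp e hinj (fun i => n i - 1) hT]
    simp [hcz]
  -- Part 2
  have part2 : ∀ T ≤ (S.map (fun x => -x) + S), IsMinZS T → Multiset.card T < 3 := by
    intro T hT hmin
    by_contra hcard
    push_neg at hcard
    obtain ⟨A, B, hA, hB, hTAB⟩ := aux_split T (S.map (fun x => -x)) S hT
    rw [hSmap] at hA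
    set a : Fin r → ℕ := fun i => A.count (-(e i)) with ha
    set b : Fin r → ℕ := fun i => B.count (e i) with hb
    have haA : ∀ j, A.count (-(e j)) = a j := fun _ => rfl
    have hbB : ∀ j, B.count (e j) = b j := fun _ => rfl
    have hAsum : A.sum = ∑ i, a i • (-(e i)) := aux_sum _ hneginj (fun i => n i - 1) hA
    have hBsum : B.sum = ∑ i, b i • e i := aux_sum e hinj (fun i => n i - 1) hB
    have hTsum : T.sum = 0 := hmin.2.1
    have hz : ∑ i, ((b i : ℤ) - (a i : ℤ)) • e i = 0 := by
      have : ∑ i, ((b i : ℤ) - (a i : ℤ)) • e i = B.sum + A.sum := by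
        rw [hAsum, hBsum, ← Finset.sum_add_distrib]
        refine Finset.sum_congr rfl fun i _ => ?_
        rw [sub_smul, natCast_zsmul, natCast_zsmul, smul_neg]
        abel
      rw [this, ← add_comm A.sum B.sum, ← Multiset.sum_add, ← hTAB, hTsum]
    have hab : ∀ i, a i = b i := by
      intro i
      have hd : (n i : ℤ) ∣ ((b i : ℤ) - (a i : ℤ)) := hdvd _ hz i
      have hai : a i ≤ n i - 1 := aux_le _ hneginj (fun i => n i - 1) hA i
      have hbi : b i ≤ n i - 1 := aux_le e hinj (fun i => n i - 1) hB i
      have h0 : ((b i : ℤ) - (a i : ℤ)) = 0 := by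
        apply Int.eq_zero_of_abs_lt_dvd hd
        have := h1 i
        rw [abs_lt]
        omega
      omega
    -- find an index with a i ≥ 1
    have hcA : Multiset.card A = ∑ i, a i := by
      conv_lhs => rw [aux_decomp _ hneginj (fun i => n i - 1) hA]
      rw [aux_card_sum]
      exact Finset.sum_congr rfl fun i _ => Multiset.card_replicate _ _
    have hcB : Multiset.card B = ∑ i, b i := by
      conv_lhs => rw [aux_decomp e hinj (fun i => n i - 1) hB]
      rw [aux_card_sum]
      exact Finset.sum_congr rfl fun i _ => Multiset.card_replicate _ _
    have hcardT : Multiset.card T = ∑ i, (a i + b i) := by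
      rw [hTAB, Multiset.card_add, hcA, hcB, ← Finset.sum_add_distrib]
    have hex : ∃ i, 1 ≤ a i := by
      by_contra hno
      push_neg at hno
      have : ∀ i, a i = 0 := fun i => by have := hno i; omega
      have : Multiset.card T = 0 := by
        rw [hcardT]
        exact Finset.sum_eq_zero fun i _ => by
          have h1 := this i
          have h2 := hab i
          omega
      omega
    obtain ⟨i, hi⟩ := hex
    -- the pair {-(e i), e i} is a proper nonempty zero-sum subsequence
    set P : Multiset G := -(e i) ::ₘ {e i} with hP
    have hPle : P ≤ T := by
      rw [Multiset.le_iff_count]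
      intro g
      rw [hTAB, Multiset.count_add, hP, Multiset.count_cons, Multiset.count_singleton]
      by_cases hg1 : g = -(e i) <;> by_cases hg2 : g = e i
      · rw [if_pos hg2, if_pos hg1]
        have h3 : A.count g = a i := by rw [hg1, haA]
        have h4 : B.count g = b i := by rw [hg2, hbB]
        have := hab i
        omega
      · rw [if_neg hg2, if_pos hg1]
        have h3 : A.count g = a i := by rw [hg1, haA]
        omega
      · rw [if_pos hg2, if_neg hg1]
        have h4 : B.count g = b i := by rw [hg2, hbB]
        have := hab i
        omega
      · rw [if_neg hg2, if_neg hg1]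
        omega
    have hPne : P ≠ 0 := by
      rw [hP]; exact Multiset.cons_ne_zero
    have hPneT : P ≠ T := by
      intro h
      have : Multiset.card P = Multiset.card T := by rw [h]
      rw [hP] at this
      simp at this
      omega
    have hPsum : P.sum = 0 := by
      rw [hP]; simp
    exact hmin.2.2 P hPle hPne hPneT hPsum
  refine ⟨part1, part2, ?_⟩
  -- Part 3
  rw [mInv]
  apply le_csInf
  · -- nonemptiness: a huge ℓ works vacuously
    refine ⟨Fintype.card G * Fintype.card G + 1, ?_⟩
    intro X hX0 hXc hlen
    exfalso
    have hcard : Multiset.card X ≤ Fintype.card G * Fintype.card G := by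
      rw [← Multiset.toFinset_sum_count_eq]
      calc ∑ g ∈ X.toFinset, X.count g ≤ ∑ g : G, X.count g :=
            Finset.sum_le_sum_of_subset (Finset.subset_univ _)
        _ ≤ ∑ _g : G, Fintype.card G := by
            refine Finset.sum_le_sum fun g _ => ?_
            by_cases hg : g = 0
            · rw [hg, Multiset.count_eq_zero_of_notMem (fun h => hX0 0 h rfl)]
              exact Nat.zero_le _
            · exact le_trans (hXc g hg) addOrderOf_le_card_univ
        _ = Fintype.card G * Fintype.card G := by
            rw [Finset.sum_const, Finset.card_univ, smul_eq_mul]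
    omega
  · intro ℓ hℓ
    by_contra hlt
    push_neg at hlt
    set S₀ : Multiset G := S.map (fun x => -x) + S with hS₀
    have hmem : ∀ g ∈ S₀, g ≠ 0 := by
      intro g hg
      rw [hS₀, Multiset.mem_add] at hg
      rcases hg with hg | hg
      · rw [Multiset.mem_map] at hg
        obtain ⟨x, hx, rfl⟩ := hg
        rw [hS, Multiset.mem_sum] at hx
        obtain ⟨j, -, hj⟩ := hx
        rw [Multiset.eq_of_mem_replicate hj]
        exact neg_ne_zero.mpr (hne0 j)
      · rw [hS, Multiset.mem_sum] at hg
        obtain ⟨j, -, hj⟩ := hg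
        rw [Multiset.eq_of_mem_replicate hj]
        exact hne0 j
    have hcnt : ∀ g : G, g ≠ 0 → S₀.count g ≤ addOrderOf g := by
      intro g hg
      rw [hS₀, Multiset.count_add, hSmap]
      by_cases hg1 : ∃ j, e j = g
      · obtain ⟨j, rfl⟩ := hg1
        rw [hS, aux_count e hinj (fun i => n i - 1) j, hord j]
        by_cases hj2 : -(e j) = e j
        · have hcnt2 : (∑ i, Multiset.replicate (n i - 1) (-(e i))).count (e j) = n j - 1 := by
            conv_lhs => rw [← hj2]
            exact aux_count _ hneginj (fun i => n i - 1) j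
          rw [hcnt2]
          have := hself j hj2
          omega
        · have hcnt2 : (∑ i, Multiset.replicate (n i - 1) (-(e i))).count (e j) = 0 := by
            apply aux_count0
            intro i hi
            rcases eq_or_ne i j with rfl | hij
            · exact hj2 hi
            · exact hnegne i j hij hi
          rw [hcnt2]
          omega
      · push_neg at hg1
        by_cases hg2 : ∃ j, -(e j) = g
        · obtain ⟨j, rfl⟩ := hg2
          rw [aux_count _ hneginj (fun i => n i - 1) j]
          have hcnt2 : S.count (-(e j)) = 0 := by
            rw [hS]
            exact aux_count0 e (fun i => n i - 1) (fun i h => hg1 i h)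
          rw [hcnt2, addOrderOf_neg, hord j]
          omega
        · push_neg at hg2
          have c1 : (∑ i, Multiset.replicate (n i - 1) (-(e i))).count g = 0 :=
            aux_count0 _ (fun i => n i - 1) hg2
          have c2 : S.count g = 0 := by
            rw [hS]; exact aux_count0 e (fun i => n i - 1) hg1
          rw [c1, c2]
          exact Nat.zero_le _
    have hcardS : Multiset.card S = ∑ i, (n i - 1) := by
      rw [hS, aux_card_sum]
      exact Finset.sum_congr rfl fun i _ => Multiset.card_replicate _ _
    have hcardS₀ : Multiset.card S₀ = 2 * ∑ i, (n i - 1) := by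
      rw [hS₀, Multiset.card_add, Multiset.card_map, hcardS]
      ring
    have hlen : ℓ ≤ Multiset.card S₀ := by
      rw [hcardS₀]
      omega
    obtain ⟨T, hTle, hTmin, hTcard⟩ := hℓ S₀ hmem hcnt hlen
    have := part2 T hTle hTmin
    omega
end

section
/- Let G be a finite abelian group. Then exp(G)·k*(G) ≥ d*(G), and equality holds if and only if G is a p-group of the form C_n^r for some n, r ∈ ℕ (or G is trivial). -/
/-!
By uniqueness of elementary divisors, the `qⱼ` are the prime-power parts of the `nᵢ`, so
`exp(G) k*(G) = ∑ᵢ exp(G) k*(C_{nᵢ})`, and it suffices to compare termwise with `nᵢ - 1`.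
For a prime power `m` one has `m k*(C_m) = m - 1`; otherwise `m` has at least two prime-power
parts, each contributing at least `1/2`, so `k*(C_m) ≥ 1`. Since `nᵢ ≤ exp(G)`, each term is
at least `nᵢ - 1`, with equality exactly when `nᵢ = exp(G)` is a prime power.
-/

open Finset

namespace Multiset

theorem count_add_one_eq_sum_min (A : Multiset ℕ) (k : ℕ) :
    (A.count (k + 1) : ℤ) = 2 * (A.map fun a => min a (k + 1)).sum
      - (A.map fun a => min a k).sum - (A.map fun a => min a (k + 2)).sum := by
  induction A using Multiset.induction_on with
  | empty => simp
  | cons a A ih =>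
    simp only [count_cons, map_cons, sum_cons]
    split_ifs <;> omega

theorem count_prime_pow_eq_count_map_factorization {M : Multiset ℕ} (hM : ∀ x ∈ M, IsPrimePow x)
    {p : ℕ} (hp : p.Prime) (k : ℕ) :
    M.count (p ^ (k + 1)) = (M.map (·.factorization p)).count (k + 1) := by
  rw [count_map, count_eq_card_filter_eq]
  congr 1
  refine filter_congr fun x hx => ?_
  obtain ⟨p', e, hp', he, rfl⟩ := hM x hx
  obtain ⟨e, rfl⟩ := Nat.exists_eq_add_one.mpr he
  rw [hp'.nat_prime.factorization_pow, Finsupp.single_apply]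
  split_ifs with h
  · subst h
    exact ⟨fun h => by rw [(hp.pow_inj hp'.nat_prime h).2], fun h => by rw [h]⟩
  · exact iff_false_intro fun h' => h (hp.pow_inj hp'.nat_prime h').1.symm

theorem eq_of_sum_min_factorization {M M' : Multiset ℕ} (hM : ∀ x ∈ M, IsPrimePow x)
    (hM' : ∀ x ∈ M', IsPrimePow x)
    (h : ∀ p, p.Prime → ∀ t, (M.map fun x => min (x.factorization p) t).sum =
      (M'.map fun x => min (x.factorization p) t).sum) :
    M = M' := by
  ext x
  by_cases hx : IsPrimePow x
  · obtain ⟨p, e, hp, he, rfl⟩ := hx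
    obtain ⟨k, rfl⟩ := Nat.exists_eq_add_one.mpr he
    rw [count_prime_pow_eq_count_map_factorization hM hp.nat_prime,
      count_prime_pow_eq_count_map_factorization hM' hp.nat_prime, ← Nat.cast_inj (R := ℤ),
      count_add_one_eq_sum_min, count_add_one_eq_sum_min]
    simp only [map_map, Function.comp_def, h p hp.nat_prime]
  · rw [count_eq_zero_of_notMem fun hxM => hx (hM x hxM),
      count_eq_zero_of_notMem fun hxM => hx (hM' x hxM)]

end Multiset

namespace Nat

def primePowerParts (m : ℕ) : Multiset ℕ :=
  m.primeFactors.val.map fun p => p ^ m.factorization p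

theorem isPrimePow_of_mem_primePowerParts {m x : ℕ} (hx : x ∈ m.primePowerParts) :
    IsPrimePow x := by
  obtain ⟨p, hp, rfl⟩ := Multiset.mem_map.mp hx
  exact (Nat.prime_of_mem_primeFactors hp).isPrimePow.pow
    (Finsupp.mem_support_iff.mp hp)

theorem sum_primePowerParts_min_factorization (m p t : ℕ) :
    (m.primePowerParts.map fun x => min (x.factorization p) t).sum =
      min (m.factorization p) t := by
  rw [primePowerParts, Multiset.map_map, Finset.sum_map_val]
  by_cases hp : p ∈ m.primeFactors
  · rw [sum_eq_single_of_mem p hp fun x hx hxp => ?_]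
    · simp [(prime_of_mem_primeFactors hp).factorization_pow]
    · simp [(prime_of_mem_primeFactors hx).factorization_pow, hxp]
  · rw [Finsupp.notMem_support_iff.mp hp]
    refine sum_eq_zero fun x hx => ?_
    have hxp : x ≠ p := fun h => hp (h ▸ hx)
    simp [(prime_of_mem_primeFactors hx).factorization_pow, hxp]

theorem factorization_gcd_prime_pow {m p : ℕ} (hm : m ≠ 0) (hp : p.Prime) (t : ℕ) :
    (m.gcd (p ^ t)).factorization p = min (m.factorization p) t := by
  rw [factorization_gcd hm (pow_ne_zero t hp.ne_zero), Finsupp.inf_apply, hp.factorization_pow,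
    Finsupp.single_eq_same]

end Nat

theorem ZMod.card_nsmul_eq_zero {m : ℕ} (hm : m ≠ 0) (c : ℕ) :
    Nat.card {x : ZMod m // c • x = 0} = m.gcd c := by
  have : NeZero m := ⟨hm⟩
  simpa using IsAddCyclic.card_nsmulAddMonoidHom_ker (ZMod m) c

theorem card_nsmul_eq_zero_pi {ι : Type*} [Fintype ι] {n : ι → ℕ} (hn : ∀ i, n i ≠ 0) (c : ℕ) :
    Nat.card {x : (i : ι) → ZMod (n i) // c • x = 0} = ∏ i, (n i).gcd c := by
  have e : {x : (i : ι) → ZMod (n i) // c • x = 0} ≃ ((i : ι) → {y : ZMod (n i) // c • y = 0}) :=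
    (Equiv.subtypeEquivRight fun x => by simp [funext_iff]).trans
      (Equiv.subtypePiEquivPi (p := fun i (y : ZMod (n i)) => c • y = 0))
  rw [Nat.card_congr e, Nat.card_pi]
  exact prod_congr rfl fun i _ => ZMod.card_nsmul_eq_zero (hn i) c

theorem AddEquiv.card_nsmul_eq_zero {G H : Type*} [AddCommGroup G] [AddCommGroup H] (e : G ≃+ H)
    (c : ℕ) : Nat.card {x : G // c • x = 0} = Nat.card {y : H // c • y = 0} :=
  Nat.card_congr <| e.toEquiv.subtypeEquiv fun x => by simp [← map_nsmul]

/-- Uniqueness of elementary divisors: both sides compute the torsion counts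
`|G[p ^ t]| = p ^ ∑ₓ min (vₚ x) t`, which determine a multiset of prime powers. -/
theorem map_eq_bind_primePowerParts_of_addEquiv {ι κ : Type*} [Fintype ι] [Fintype κ]
    {n : ι → ℕ} {q : κ → ℕ} (hn : ∀ i, n i ≠ 0) (hq : ∀ j, IsPrimePow (q j))
    (e : ((i : ι) → ZMod (n i)) ≃+ ((j : κ) → ZMod (q j))) :
    univ.val.map q = (univ.val.map n).bind Nat.primePowerParts := by
  refine Multiset.eq_of_sum_min_factorization (by simpa using hq)
    (by simpa using fun i x hx => Nat.isPrimePow_of_mem_primePowerParts hx) fun p hp t => ?_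
  have hcard := (e.card_nsmul_eq_zero (p ^ t)).symm
  rw [card_nsmul_eq_zero_pi hn, card_nsmul_eq_zero_pi fun j => (hq j).ne_zero] at hcard
  have := congrArg (fun m => m.factorization p) hcard
  simp only [Nat.factorization_prod fun i _ => Nat.gcd_ne_zero_left (hq i).ne_zero,
    Nat.factorization_prod fun i _ => Nat.gcd_ne_zero_left (hn i), Finsupp.finsetSum_apply,
    Nat.factorization_gcd_prime_pow (hq _).ne_zero hp,
    Nat.factorization_gcd_prime_pow (hn _) hp] at this
  simp only [Multiset.map_map, Multiset.map_bind, Multiset.sum_bind, Function.comp_def,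
    Nat.sum_primePowerParts_min_factorization, Finset.sum_map_val, this]

namespace Nat

/-- `k*(C_m)` in the paper's notation. -/
def crossNumber (m : ℕ) : ℚ :=
  (m.primePowerParts.map fun q : ℕ => ((q : ℚ) - 1) / q).sum

theorem crossNumber_of_isPrimePow {m : ℕ} (hm : IsPrimePow m) :
    crossNumber m = ((m : ℚ) - 1) / m := by
  obtain ⟨p, k, hp, hk, rfl⟩ := hm
  simp [crossNumber, primePowerParts, primeFactors_prime_pow hk.ne' hp.nat_prime,
    hp.nat_prime.factorization_pow]

theorem one_le_crossNumber {m : ℕ} (hm : 2 ≤ m) (hpp : ¬ IsPrimePow m) : 1 ≤ crossNumber m := by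
  have hcard : 2 ≤ m.primePowerParts.card := by
    rw [primePowerParts, Multiset.card_map, ← Finset.card_def]
    exact (Finset.one_lt_card_iff_nontrivial.mpr
      ((not_isPrimePow_iff_nontrivial_of_two_le hm).mp hpp))
  have hhalf : ∀ x ∈ m.primePowerParts.map fun q : ℕ => ((q : ℚ) - 1) / q, (1 / 2 : ℚ) ≤ x := by
    simp only [Multiset.mem_map]
    rintro _ ⟨q, hq, rfl⟩
    have : (2 : ℚ) ≤ q := by exact_mod_cast (isPrimePow_of_mem_primePowerParts hq).two_le
    rw [le_div_iff₀ (by positivity)]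
    linarith
  calc (1 : ℚ) ≤ m.primePowerParts.card • (1 / 2 : ℚ) := by
        rw [nsmul_eq_mul]
        have : (2 : ℚ) ≤ m.primePowerParts.card := by exact_mod_cast hcard
        linarith
    _ ≤ crossNumber m := by
        simpa [crossNumber] using Multiset.card_nsmul_le_sum hhalf

theorem sub_one_div_le_crossNumber {m : ℕ} (hm : 0 < m) : ((m : ℚ) - 1) / m ≤ crossNumber m := by
  obtain rfl | hm2 := (Nat.one_le_iff_ne_zero.mpr hm.ne').eq_or_lt
  · simp [crossNumber, primePowerParts]
  by_cases hpp : IsPrimePow m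
  · exact (crossNumber_of_isPrimePow hpp).ge
  · refine le_trans ?_ (one_le_crossNumber hm2 hpp)
    rw [div_le_one (by positivity)]
    linarith

theorem sub_one_le_mul_crossNumber {m E : ℕ} (hm : 0 < m) (hmE : m ≤ E) :
    (m : ℚ) - 1 ≤ E * crossNumber m := by
  have hm' : (1 : ℚ) ≤ m := by exact_mod_cast hm
  have hmE' : (m : ℚ) ≤ E := by exact_mod_cast hmE
  have hk := sub_one_div_le_crossNumber hm
  have hk0 : 0 ≤ crossNumber m := (div_nonneg (by linarith) (by linarith)).trans hk
  calc (m : ℚ) - 1 = m * (((m : ℚ) - 1) / m) := by field_simp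
    _ ≤ m * crossNumber m := by gcongr
    _ ≤ E * crossNumber m := by gcongr

theorem mul_crossNumber_eq_sub_one_iff {m E : ℕ} (hm : 2 ≤ m) (hmE : m ≤ E) :
    E * crossNumber m = m - 1 ↔ m = E ∧ IsPrimePow m := by
  constructor
  · intro h
    have hm' : (2 : ℚ) ≤ m := by exact_mod_cast hm
    have hmE' : (m : ℚ) ≤ E := by exact_mod_cast hmE
    have hk : ((m : ℚ) - 1) / m ≤ crossNumber m := sub_one_div_le_crossNumber (by omega)
    have hk_pos : 0 < crossNumber m := by
      have : (0 : ℚ) < ((m : ℚ) - 1) / m := _root_.div_pos (by linarith) (by linarith)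
      linarith
    -- equality in `E k ≥ m k ≥ m - 1` forces `E = m` (as `k > 0`) and `k = (m - 1) / m < 1`
    have hmk : (m : ℚ) * (((m : ℚ) - 1) / m) = m - 1 := by field_simp
    have hEm : (m : ℚ) = E := by nlinarith
    refine ⟨by exact_mod_cast hEm, ?_⟩
    by_contra hpp
    have := one_le_crossNumber hm hpp
    nlinarith
  · rintro ⟨rfl, hpp⟩
    rw [crossNumber_of_isPrimePow hpp]
    field_simp

end Nat

theorem forall_eq_lcm_and_isPrimePow_iff {ι : Type*} [Fintype ι] {n : ι → ℕ}
    (hn : ∀ i, 1 < n i) :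
    (∀ i, n i = univ.lcm n ∧ IsPrimePow (n i)) ↔ ∃ p k : ℕ, p.Prime ∧ ∀ i, n i = p ^ k := by
  constructor
  · intro h
    cases isEmpty_or_nonempty ι with
    | inl => exact ⟨2, 0, Nat.prime_two, isEmptyElim⟩
    | inr =>
      obtain ⟨i₀⟩ := ‹Nonempty ι›
      obtain ⟨p, k, hp, -, hpk⟩ := (h i₀).2
      exact ⟨p, k, hp.nat_prime, fun i => by rw [(h i).1, ← (h i₀).1, hpk]⟩
  · rintro ⟨p, k, hp, h⟩ i
    have hk : 0 < k := Nat.pos_of_ne_zero fun hk => by simpa [hk, h i] using hn i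
    have hlcm : univ.lcm n = p ^ k :=
      Nat.dvd_antisymm (Finset.lcm_dvd fun j _ => (h j).dvd) (h i ▸ Finset.dvd_lcm (mem_univ i))
    exact ⟨by rw [hlcm, h i], p, k, hp.prime, hk, (h i).symm⟩

theorem stmt4_general (G : Type*) [AddCommGroup G]
    (r s : ℕ) (n : Fin r → ℕ) (q : Fin s → ℕ)
    (h1 : ∀ i, 1 < n i)
    (hq : ∀ j, ∃ p k : ℕ, p.Prime ∧ 0 < k ∧ q j = p ^ k)
    (hGn : Nonempty (G ≃+ ((i : Fin r) → ZMod (n i))))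
    (hGq : Nonempty (G ≃+ ((j : Fin s) → ZMod (q j)))) :
    (∑ i, ((n i : ℚ) - 1)) ≤ (AddMonoid.exponent G : ℚ) * ∑ j, ((q j : ℚ) - 1) / (q j) ∧
    ((AddMonoid.exponent G : ℚ) * ∑ j, ((q j : ℚ) - 1) / (q j) = ∑ i, ((n i : ℚ) - 1) ↔
      ∃ p k : ℕ, p.Prime ∧ ∀ i, n i = p ^ k) := by
  obtain ⟨en⟩ := hGn
  obtain ⟨eq⟩ := hGq
  have hn0 : ∀ i, n i ≠ 0 := fun i => (zero_lt_one.trans (h1 i)).ne'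
  have hqpp : ∀ j, IsPrimePow (q j) := fun j => by
    obtain ⟨p, k, hp, hk, hpk⟩ := hq j
    exact ⟨p, k, hp.prime, hk, hpk.symm⟩
  have hexp : AddMonoid.exponent G = univ.lcm n := by
    simp [AddMonoid.exponent_eq_of_addEquiv en, AddMonoid.exponent_pi, ZMod.exponent]
  have hle : ∀ i, n i ≤ univ.lcm n := fun i =>
    Nat.le_of_dvd (Nat.pos_of_ne_zero (by simpa [Finset.lcm_eq_zero_iff] using hn0))
      (Finset.dvd_lcm (mem_univ i))
  have hsum : ∑ j, ((q j : ℚ) - 1) / q j = ∑ i, (n i).crossNumber := by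
    have hM := map_eq_bind_primePowerParts_of_addEquiv hn0 hqpp (en.symm.trans eq)
    calc ∑ j, ((q j : ℚ) - 1) / q j
          = ((univ.val.map q).map fun x : ℕ => ((x : ℚ) - 1) / x).sum := by
          rw [Multiset.map_map, Finset.sum_map_val]; rfl
      _ = ∑ i, (n i).crossNumber := by
          rw [hM, Multiset.map_bind, Multiset.sum_bind, Multiset.map_map, Finset.sum_map_val]; rfl
  have hterm : ∀ i ∈ univ, (n i : ℚ) - 1 ≤ univ.lcm n * (n i).crossNumber := fun i _ =>
    Nat.sub_one_le_mul_crossNumber (hn0 i).bot_lt (hle i)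
  rw [hexp, hsum, Finset.mul_sum, eq_comm, Finset.sum_eq_sum_iff_of_le hterm,
    ← forall_eq_lcm_and_isPrimePow_iff h1]
  refine ⟨Finset.sum_le_sum hterm, forall_congr' fun i => ?_⟩
  rw [eq_comm, Nat.mul_crossNumber_eq_sub_one_iff (h1 i) (hle i)]
  simp

theorem stmt4 (G : Type*) [AddCommGroup G] [Fintype G]
    (r s : ℕ) (n : Fin r → ℕ) (q : Fin s → ℕ)
    (h1 : ∀ i, 1 < n i) (hchain : ∀ i j : Fin r, i ≤ j → n i ∣ n j)
    (hq : ∀ j, ∃ p k : ℕ, p.Prime ∧ 0 < k ∧ q j = p ^ k)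
    (hGn : Nonempty (G ≃+ ((i : Fin r) → ZMod (n i))))
    (hGq : Nonempty (G ≃+ ((j : Fin s) → ZMod (q j)))) :
    (∑ i, ((n i : ℚ) - 1)) ≤ (AddMonoid.exponent G : ℚ) * ∑ j, ((q j : ℚ) - 1) / (q j) ∧
    ((AddMonoid.exponent G : ℚ) * ∑ j, ((q j : ℚ) - 1) / (q j) = ∑ i, ((n i : ℚ) - 1) ↔
      ∃ p k : ℕ, p.Prime ∧ ∀ i, n i = p ^ k) :=
  stmt4_general G r s n q h1 hq hGn hGq
end

section
/- Let G be a cyclic group of order n ≥ 5, let m ∈ [1,n], and let S be a sequence over G all of whose terms have order n. If |S| ≥ (φ(n)(n−1)+1)/φ_m(n), then S has a minimal zero-sum subsequence of length at least ⌈n/m⌉, where φ_m(n) is the number of integers a ∈ [1,m] coprime to n. -/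
/-- Legendre's totient function φ_m(n): the number of a ∈ [1,m] coprime to n. -/
def legendrePhi (m n : ℕ) : ℕ :=
  ((Finset.Icc 1 m).filter fun a => Nat.Coprime a n).card

/-- Auxiliary: exchanging a Finset sum and a multiset filter-count. -/
lemma aux_swap_sum {α β : Type*} (s : Finset β) (Z : Multiset α)
    (p : β → α → Prop) [∀ b, DecidablePred (p b)] [∀ a, Decidable (∀ b, ¬ p b a)]
    [DecidableEq β] :
    ∑ u ∈ s, Multiset.card (Z.filter (p u)) =
      (Z.map fun x => (s.filter fun u => p u x).card).sum := by
  induction Z using Multiset.induction with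
  | empty => simp
  | cons a Z ih =>
    simp only [Multiset.filter_cons, Multiset.card_add, Multiset.map_cons, Multiset.sum_cons,
      Finset.sum_add_distrib, ih]
    congr 1
    rw [Finset.card_filter]
    refine Finset.sum_congr rfl fun u _ => ?_
    by_cases h : p u a <;> simp [h]

/-- Auxiliary: a list of length ≥ n has a nonempty sublist with f-sum divisible by n. -/
lemma aux_block {α : Type*} (n : ℕ) (hn : 0 < n) (f : α → ℕ) (L : List α)
    (hL : n ≤ L.length) :
    ∃ B : List α, B.Sublist L ∧ B ≠ [] ∧ n ∣ (B.map f).sum := by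
  set M := L.map f with hM
  have hml : M.length = L.length := by simp [hM]
  have hmaps : ∀ k ∈ Finset.range (n + 1),
      ((M.take k).sum % n) ∈ Finset.range n := by
    intro k _
    exact Finset.mem_range.mpr (Nat.mod_lt _ hn)
  obtain ⟨i, hi, j, hj, hij, heq⟩ :=
    Finset.exists_ne_map_eq_of_card_lt_of_maps_to
      (by simp : (Finset.range n).card < (Finset.range (n + 1)).card) hmaps
  wlog hlt : i < j generalizing i j
  · exact this j hj i hi hij.symm heq.symm (by omega)
  have hi' : i ≤ n := by simpa using Nat.lt_succ_iff.mp (Finset.mem_range.mp hi)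
  have hj' : j ≤ n := by simpa using Nat.lt_succ_iff.mp (Finset.mem_range.mp hj)
  refine ⟨(L.drop i).take (j - i), ?_, ?_, ?_⟩
  · exact ((L.drop i).take_sublist _).trans (L.drop_sublist i)
  · have : ((L.drop i).take (j - i)).length = j - i := by
      rw [List.length_take, List.length_drop]
      omega
    intro h
    rw [h] at this
    simp at this
    omega
  · have hsplit : M.take j = M.take i ++ (M.drop i).take (j - i) := by
      have hji : j = i + (j - i) := by omega
      conv_lhs => rw [hji, List.take_add]
    have hsum : (M.take j).sum = (M.take i).sum + ((M.drop i).take (j - i)).sum := by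
      rw [hsplit, List.sum_append]
    have hmap : ((L.drop i).take (j - i)).map f = (M.drop i).take (j - i) := by
      simp [hM, List.map_take, List.map_drop]
    rw [hmap]
    have hle : (M.take i).sum ≤ (M.take j).sum := by omega
    have hdvd := (Nat.modEq_iff_dvd' hle).mp heq
    have h2 : (M.take j).sum - (M.take i).sum = ((M.drop i).take (j - i)).sum := by omega
    rw [← h2]
    exact hdvd

/-- Auxiliary: selection of a minimal nonempty sub-multiset with f-sum divisible by n. -/
lemma aux_min {α : Type*} (f : α → ℕ) (n : ℕ) :
    ∀ T : Multiset α, T ≠ 0 → n ∣ (T.map f).sum →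
    ∃ T', T' ≤ T ∧ T' ≠ 0 ∧ n ∣ (T'.map f).sum ∧
      ∀ U, U ≤ T' → U ≠ 0 → U ≠ T' → ¬ n ∣ (U.map f).sum := by
  intro T
  induction T using Multiset.strongInductionOn with
  | ih T ih =>
    intro h0 hd
    by_cases h : ∃ U, U ≤ T ∧ U ≠ 0 ∧ U ≠ T ∧ n ∣ (U.map f).sum
    · obtain ⟨U, hUT, hU0, hUne, hUd⟩ := h
      have hlt : U < T := lt_of_le_of_ne hUT hUne
      obtain ⟨T', h1, h2, h3, h4⟩ := ih U hlt hU0 hUd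
      exact ⟨T', h1.trans hUT, h2, h3, h4⟩
    · push_neg at h
      exact ⟨T, le_refl T, h0, hd, fun U hU h1 h2 => h U hU h1 h2⟩

lemma aux_card_le_sum (s : Multiset ℕ) (h : ∀ x ∈ s, 1 ≤ x) : Multiset.card s ≤ s.sum := by
  induction s using Multiset.induction with
  | empty => simp
  | cons a s ih =>
    simp only [Multiset.card_cons, Multiset.sum_cons]
    have := h a (Multiset.mem_cons_self a s)
    have := ih fun x hx => h x (Multiset.mem_cons_of_mem hx)
    omega

/-- For a unit z, the number of units u with (z * u⁻¹).val ≤ m equals legendrePhi m n. -/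
lemma aux_count_s7 (n m : ℕ) (h5 : 5 ≤ n) (hmn : m ≤ n) [NeZero n] (z : (ZMod n)ˣ) :
    (Finset.univ.filter fun u : (ZMod n)ˣ =>
      (((z * u⁻¹ : (ZMod n)ˣ) : ZMod n)).val ≤ m).card = legendrePhi m n := by
  classical
  haveI : Fact (1 < n) := ⟨by omega⟩
  have step1 : (Finset.univ.filter fun u : (ZMod n)ˣ =>
      (((z * u⁻¹ : (ZMod n)ˣ) : ZMod n)).val ≤ m).card =
      (Finset.univ.filter fun w : (ZMod n)ˣ => ((w : ZMod n)).val ≤ m).card := by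
    refine Finset.card_bij' (fun u _ => z * u⁻¹) (fun w _ => w⁻¹ * z) ?hi ?hj ?li ?ri
    case hi =>
      intro u hu
      simp only [Finset.mem_filter, Finset.mem_univ, true_and] at hu ⊢
      exact hu
    case hj =>
      intro w hw
      simp only [Finset.mem_filter, Finset.mem_univ, true_and] at hw ⊢
      have h : z * (w⁻¹ * z)⁻¹ = w := by group
      rw [h]
      exact hw
    case li => intro u _; group
    case ri => intro w _; group
  rw [step1]
  unfold legendrePhi
  have hlt : ∀ a : ℕ, a ∈ (Finset.Icc 1 m).filter (fun a => Nat.Coprime a n) → a < n := by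
    intro a ha
    simp only [Finset.mem_filter, Finset.mem_Icc] at ha
    obtain ⟨⟨h1, h2⟩, hcop⟩ := ha
    rcases lt_or_eq_of_le (h2.trans hmn) with h | h
    · exact h
    · exfalso; rw [h] at hcop
      have h3 : Nat.gcd n n = n := Nat.gcd_self n
      have h4 : Nat.gcd n n = 1 := hcop
      omega
  refine Finset.card_bij' (fun (w : (ZMod n)ˣ) _ => ((w : ZMod n)).val)
    (fun a ha => ZMod.unitOfCoprime a (by
      simp only [Finset.mem_filter, Finset.mem_Icc] at ha; exact ha.2)) ?hi ?hj ?li ?ri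
  case hi =>
    intro w hw
    simp only [Finset.mem_filter, Finset.mem_univ, true_and] at hw
    simp only [Finset.mem_filter, Finset.mem_Icc]
    refine ⟨⟨?_, hw⟩, ZMod.val_coe_unit_coprime w⟩
    have h0 : ((w : ZMod n)) ≠ 0 := w.ne_zero
    have := (ZMod.val_eq_zero ((w : ZMod n))).not.mpr h0
    omega
  case hj =>
    intro a ha
    have han := hlt a ha
    simp only [Finset.mem_filter, Finset.mem_Icc] at ha
    simp only [Finset.mem_filter, Finset.mem_univ, true_and, ZMod.coe_unitOfCoprime]
    rw [ZMod.val_cast_of_lt han]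
    exact ha.1.2
  case li =>
    intro w hw
    apply Units.ext
    simp [ZMod.coe_unitOfCoprime, ZMod.natCast_zmod_val]
  case ri =>
    intro a ha
    have han := hlt a ha
    simp [ZMod.coe_unitOfCoprime, ZMod.val_cast_of_lt han]


theorem stmt7 (G : Type*) [AddCommGroup G] [Fintype G] (hcyc : IsAddCyclic G)
    (n : ℕ) (hn : Fintype.card G = n) (h5 : 5 ≤ n)
    (m : ℕ) (hm1 : 1 ≤ m) (hmn : m ≤ n)
    (S : Multiset G) (hord : ∀ g ∈ S, addOrderOf g = n)
    (hlen : ((Nat.totient n * (n - 1) + 1 : ℕ) : ℚ) / (legendrePhi m n : ℚ) ≤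
      (Multiset.card S : ℚ)) :
    ∃ T, T ≤ S ∧ IsMinZS T ∧ ⌈(n : ℚ) / (m : ℚ)⌉ ≤ (Multiset.card T : ℤ) := by
  classical
  have hn0 : n ≠ 0 := by omega
  haveI : NeZero n := ⟨hn0⟩
  haveI : Fact (1 < n) := ⟨by omega⟩
  -- the isomorphism
  have e : ZMod n ≃+ G := by
    have h := zmodAddCyclicAddEquiv hcyc
    rwa [Nat.card_eq_fintype_card, hn] at h
  set ε := e.symm with hε
  set Z : Multiset (ZMod n) := S.map ε with hZ
  -- every element of Z is a unit
  have hZunit : ∀ x ∈ Z, IsUnit x := by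
    intro x hx
    rw [hZ, Multiset.mem_map] at hx
    obtain ⟨g, hg, rfl⟩ := hx
    have hxo : addOrderOf (ε g) = n := by
      rw [hε, AddEquiv.addOrderOf_eq]
      exact hord g hg
    have hcast : (((ε g).val : ℕ) : ZMod n) = ε g := ZMod.natCast_zmod_val _
    rw [← hcast]
    rw [ZMod.isUnit_iff_coprime]
    have := ZMod.addOrderOf_coe (ε g).val hn0
    rw [hcast, hxo] at this
    have hg1 : n.gcd (ε g).val = 1 := by
      have hd : n.gcd (ε g).val ∣ n := Nat.gcd_dvd_left _ _
      rcases Nat.eq_zero_or_pos (n.gcd (ε g).val) with h | h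
      · rw [h] at this; simp at this; omega
      · by_contra hne
        have h2 : 2 ≤ n.gcd (ε g).val := by omega
        have := Nat.div_lt_self (by omega : 0 < n) h2
        omega
    exact Nat.Coprime.symm hg1
  -- legendrePhi positivity and the size inequality over ℕ
  have hphi_pos : 0 < legendrePhi m n := by
    apply Finset.card_pos.mpr
    exact ⟨1, by simp [Finset.mem_filter, Finset.mem_Icc, hm1, Nat.coprime_one_left]⟩
  have hsize : Nat.totient n * (n - 1) + 1 ≤ Multiset.card S * legendrePhi m n := by
    have h1 : ((Nat.totient n * (n - 1) + 1 : ℕ) : ℚ) ≤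
        (Multiset.card S : ℚ) * (legendrePhi m n : ℚ) := by
      rw [div_le_iff₀ (by exact_mod_cast hphi_pos)] at hlen
      exact hlen
    exact_mod_cast h1
  -- double counting: find a unit u such that many elements have small "index"
  set p : (ZMod n)ˣ → ZMod n → Prop :=
    fun u x => (x * ((u⁻¹ : (ZMod n)ˣ) : ZMod n)).val ≤ m with hp
  have hcount : ∀ x ∈ Z, (Finset.univ.filter fun u => p u x).card = legendrePhi m n := by
    intro x hx
    obtain ⟨xu, rfl⟩ := hZunit x hx
    have : ∀ u : (ZMod n)ˣ, p u ↑xu ↔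
        (((xu * u⁻¹ : (ZMod n)ˣ) : ZMod n)).val ≤ m := by
      intro u; rw [hp]; simp
    rw [show (Finset.univ.filter fun u => p u ↑xu) =
        (Finset.univ.filter fun u : (ZMod n)ˣ =>
          (((xu * u⁻¹ : (ZMod n)ˣ) : ZMod n)).val ≤ m) from
      Finset.filter_congr fun u _ => by rw [this u]]
    exact aux_count_s7 n m h5 hmn xu
  have hswap := aux_swap_sum (Finset.univ : Finset (ZMod n)ˣ) Z p
  have hsum_eq : ∑ u : (ZMod n)ˣ, Multiset.card (Z.filter (p u)) =
      Multiset.card Z * legendrePhi m n := by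
    rw [hswap]
    rw [Multiset.map_congr rfl hcount]
    simp [Multiset.map_const', mul_comm]
  have hcardZ : Multiset.card Z = Multiset.card S := by rw [hZ, Multiset.card_map]
  have hkey : ∃ u : (ZMod n)ˣ, n ≤ Multiset.card (Z.filter (p u)) := by
    by_contra hcon
    push_neg at hcon
    have hle : ∀ u : (ZMod n)ˣ, Multiset.card (Z.filter (p u)) ≤ n - 1 := by
      intro u; have := hcon u; omega
    have h1 : ∑ u : (ZMod n)ˣ, Multiset.card (Z.filter (p u)) ≤
        Nat.totient n * (n - 1) := by
      calc ∑ u : (ZMod n)ˣ, Multiset.card (Z.filter (p u))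
          ≤ ∑ _u : (ZMod n)ˣ, (n - 1) := Finset.sum_le_sum fun u _ => hle u
        _ = Fintype.card (ZMod n)ˣ * (n - 1) := by simp [Finset.sum_const, mul_comm]
        _ = Nat.totient n * (n - 1) := by rw [ZMod.card_units_eq_totient]
    rw [hsum_eq, hcardZ] at h1
    have := hsize
    nlinarith
  obtain ⟨u, hu⟩ := hkey
  set W : Multiset (ZMod n) := Z.filter (p u) with hW
  set f : ZMod n → ℕ := fun x => (x * ((u⁻¹ : (ZMod n)ˣ) : ZMod n)).val with hf
  -- elements of W: f x ∈ [1, m]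
  have hWmem : ∀ x ∈ W, 1 ≤ f x ∧ f x ≤ m := by
    intro x hx
    rw [hW, Multiset.mem_filter] at hx
    obtain ⟨hxZ, hxp⟩ := hx
    refine ⟨?_, hxp⟩
    obtain ⟨xu, rfl⟩ := hZunit x hxZ
    have hne : ((xu : ZMod n)) * ((u⁻¹ : (ZMod n)ˣ) : ZMod n) ≠ 0 := by
      have : ((xu * u⁻¹ : (ZMod n)ˣ) : ZMod n) ≠ 0 := Units.ne_zero _
      simpa using this
    have := (ZMod.val_eq_zero _).not.mpr hne
    simp only [hf]
    omega
  -- find a block with sum divisible by n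
  have hlenW : n ≤ W.toList.length := by
    rw [Multiset.length_toList]; exact hu
  obtain ⟨B, hBsub, hBne, hBdvd⟩ := aux_block n (by omega) f W.toList hlenW
  have hBW : (B : Multiset (ZMod n)) ≤ W := by
    have h1 : (B : Multiset (ZMod n)) ≤ (W.toList : Multiset (ZMod n)) :=
      Multiset.coe_le.mpr hBsub.subperm
    rwa [Multiset.coe_toList] at h1
  have hB0 : (B : Multiset (ZMod n)) ≠ 0 := by
    simpa using hBne
  have hBdvd' : n ∣ ((B : Multiset (ZMod n)).map f).sum := by
    rwa [Multiset.map_coe, Multiset.sum_coe]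
  -- select a minimal divisible sub-multiset
  obtain ⟨T', hT'B, hT'0, hT'dvd, hT'min⟩ := aux_min f n (B : Multiset (ZMod n)) hB0 hBdvd'
  have hT'W : T' ≤ W := hT'B.trans hBW
  have hT'Z : T' ≤ Z := hT'W.trans (Multiset.filter_le _ _)
  -- reconstruction: each x = (f x : ZMod n) * u, so sums relate
  have hrecon : ∀ x ∈ W, x = ((f x : ℕ) : ZMod n) * (u : ZMod n) := by
    intro x hx
    rw [hf]
    rw [ZMod.natCast_zmod_val]
    rw [mul_assoc]
    simp
  have hsum_formula : ∀ U : Multiset (ZMod n), U ≤ W →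
      U.sum = (((U.map f).sum : ℕ) : ZMod n) * (u : ZMod n) := by
    intro U hUW
    have h1 : U = U.map fun x => ((f x : ℕ) : ZMod n) * (u : ZMod n) := by
      conv_lhs => rw [← Multiset.map_id U]
      exact Multiset.map_congr rfl fun x hx => hrecon x (Multiset.mem_of_le hUW hx)
    conv_lhs => rw [h1]
    rw [Multiset.sum_map_mul_right]
    congr 1
    rw [show (U.map fun x => ((f x : ℕ) : ZMod n)) =
        (U.map f).map (fun k : ℕ => (k : ZMod n)) by rw [Multiset.map_map]; rfl]
    exact (Nat.cast_multiset_sum (U.map f)).symm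
  -- zero-sum characterization
  have hzero : ∀ U : Multiset (ZMod n), U ≤ W → (U.sum = 0 ↔ n ∣ (U.map f).sum) := by
    intro U hUW
    rw [hsum_formula U hUW]
    constructor
    · intro h
      have : (((U.map f).sum : ℕ) : ZMod n) = 0 := by
        have := Units.mul_left_eq_zero (u := u⁻¹)
          (a := (((U.map f).sum : ℕ) : ZMod n) * (u : ZMod n))
        -- multiply by u⁻¹
        have h2 : (((U.map f).sum : ℕ) : ZMod n) * (u : ZMod n) * ((u⁻¹ : (ZMod n)ˣ) : ZMod n) = 0 := by
          rw [h]; ring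
        rwa [mul_assoc, Units.mul_inv_eq_one.mpr rfl, mul_one] at h2
      exact (ZMod.natCast_eq_zero_iff _ _).mp this
    · intro h
      rw [(ZMod.natCast_eq_zero_iff _ _).mpr h, zero_mul]
  -- T' is a minimal zero-sum sequence over ZMod n
  have hT'sum : T'.sum = 0 := (hzero T' hT'W).mpr hT'dvd
  -- bounds on the sum
  set σ : ℕ := (T'.map f).sum with hσ
  have hσpos : 1 ≤ σ := by
    have h1 : Multiset.card T' ≤ σ := by
      rw [hσ]
      have : Multiset.card (T'.map f) ≤ (T'.map f).sum := by
        apply aux_card_le_sum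
        intro x hx
        rw [Multiset.mem_map] at hx
        obtain ⟨y, hy, rfl⟩ := hx
        exact (hWmem y (Multiset.mem_of_le hT'W hy)).1
      simpa using this
    have h2 : 0 < Multiset.card T' := Multiset.card_pos.mpr hT'0
    omega
  have hσn : n ≤ σ := Nat.le_of_dvd (by omega) hT'dvd
  have hσm : σ ≤ m * Multiset.card T' := by
    rw [hσ]
    have := Multiset.sum_le_card_nsmul (T'.map f) m (by
      intro x hx
      rw [Multiset.mem_map] at hx
      obtain ⟨y, hy, rfl⟩ := hx
      exact (hWmem y (Multiset.mem_of_le hT'W hy)).2)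
    simpa [mul_comm] using this
  -- transport back to G
  refine ⟨T'.map e, ?_, ?_, ?_⟩
  · -- T'.map e ≤ S
    have h1 : T'.map e ≤ Z.map e := Multiset.map_le_map hT'Z
    have h2 : Z.map e = S := by
      rw [hZ, Multiset.map_map]
      have : (e ∘ ε) = id := by
        funext x; simp [hε]
      rw [this, Multiset.map_id]
    rwa [h2] at h1
  · refine ⟨?_, ?_, ?_⟩
    · intro h
      apply hT'0
      rwa [← Multiset.card_eq_zero, Multiset.card_map, Multiset.card_eq_zero] at h
    · rw [show (T'.map e).sum = e T'.sum from
        (e.toAddMonoidHom.map_multiset_sum T').symm, hT'sum, map_zero]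
    · intro V hVT hV0 hVne hVsum
      set V' : Multiset (ZMod n) := V.map ε with hV'
      have hV'T' : V' ≤ T' := by
        have h1 : V.map ε ≤ (T'.map e).map ε := Multiset.map_le_map hVT
        rwa [Multiset.map_map, show (ε ∘ e) = id from funext fun x => by simp [hε],
          Multiset.map_id] at h1
      have hV'0 : V' ≠ 0 := by
        intro h
        apply hV0
        rwa [hV', ← Multiset.card_eq_zero, Multiset.card_map, Multiset.card_eq_zero] at h
      have hV'ne : V' ≠ T' := by
        intro h
        apply hVne
        have : V'.map e = T'.map e := by rw [h]
        rwa [hV', Multiset.map_map, show (e ∘ ε) = id from funext fun x => by simp [hε],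
          Multiset.map_id] at this
      have hV'sum : V'.sum = 0 := by
        rw [hV', show (V.map ε).sum = ε V.sum from
          (ε.toAddMonoidHom.map_multiset_sum V).symm, hVsum, map_zero]
      have := (hzero V' (hV'T'.trans hT'W)).mp hV'sum
      exact hT'min V' hV'T' hV'0 hV'ne this
  · -- length bound
    rw [Multiset.card_map]
    rw [Int.ceil_le]
    rw [div_le_iff₀ (by exact_mod_cast hm1 : (0:ℚ) < m)]
    have : (n : ℚ) ≤ (Multiset.card T' : ℚ) * m := by
      have h1 : n ≤ Multiset.card T' * m := by
        calc n ≤ σ := hσn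
          _ ≤ m * Multiset.card T' := hσm
          _ = Multiset.card T' * m := mul_comm _ _
      exact_mod_cast h1
    exact_mod_cast this
end

section
/- Let n = p_1^{α_1} ⋯ p_s^{α_s} with s ≥ 2 distinct primes p_1,…,p_s. If m ≥ 2^{s+1}·√(2s−1), then φ_m(n) ≥ (m/2)·Π_{i=1}^s (1 − 1/p_i) = m·φ(n)/(2n). -/
/-!
Inclusion–exclusion over the prime divisors `P` of `n` gives
`φ_m(n) = ∑_{t ⊆ P} (-1)^|t| ⌊m / ∏ t⌋`. Replacing each floor by the exact quotient costs less
than `1` on each of the `2^(s-1)` even terms and nothing on the odd ones, so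
`φ_m(n) ≥ m ∏ (1 - 1/p) - 2^(s-1)`. The `j`-th smallest prime is at least `2j - 1`, whence
`∏ (1 - 1/p) ≥ 1 / (2 √(2s - 1))`, and the hypothesis on `m` gives `m ∏ (1 - 1/p) ≥ 2^s`,
which absorbs the error term.
-/

open Finset

theorem prod_one_sub_eq_sum_powerset {ι R : Type*} [CommRing R] [DecidableEq ι]
    (s : Finset ι) (g : ι → R) :
    ∏ i ∈ s, (1 - g i) = ∑ t ∈ s.powerset, (-1) ^ #t * ∏ i ∈ t, g i := by
  simpa using prod_sub 1 g s

theorem prod_ite_prime_dvd {R : Type*} [CommMonoidWithZero R] {P : Finset ℕ}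
    (hP : ∀ p ∈ P, p.Prime) (a : ℕ) :
    ∏ p ∈ P, (if p ∣ a then (1 : R) else 0) = if ∏ p ∈ P, p ∣ a then 1 else 0 := by
  rw [prod_boole]
  congr 1
  exact propext ⟨prod_primes_dvd a fun p hp => (hP p hp).prime,
    fun h p hp => (dvd_prod_of_mem _ hp).trans h⟩

theorem Nat.coprime_iff_forall_primeFactors_not_dvd {a n : ℕ} (ha : a ≠ 0) (hn : n ≠ 0) :
    a.Coprime n ↔ ∀ p ∈ n.primeFactors, ¬ p ∣ a := by
  rw [← Nat.disjoint_primeFactors ha hn, disjoint_right]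
  simp only [Nat.mem_primeFactors, ne_eq, ha, not_false_eq_true, and_true, not_and]
  grind

theorem legendrePhi_eq_sum_powerset {R : Type*} [CommRing R] (m : ℕ) {n : ℕ} (hn : n ≠ 0) :
    (legendrePhi m n : R) =
      ∑ t ∈ n.primeFactors.powerset, (-1) ^ #t * ((m / ∏ p ∈ t, p : ℕ) : R) := by
  have indicator (a : ℕ) (ha : a ∈ Icc 1 m) : (if a.Coprime n then (1 : R) else 0) =
      ∑ t ∈ n.primeFactors.powerset, (-1) ^ #t * if ∏ p ∈ t, p ∣ a then 1 else 0 := calc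
    _ = ∏ p ∈ n.primeFactors, (if ¬ p ∣ a then (1 : R) else 0) := by
      have ha0 : a ≠ 0 := by grind
      simp only [prod_boole, Nat.coprime_iff_forall_primeFactors_not_dvd ha0 hn]
    _ = ∏ p ∈ n.primeFactors, (1 - if p ∣ a then (1 : R) else 0) :=
      prod_congr rfl fun p _ => by split_ifs <;> simp
    _ = _ := by
      rw [prod_one_sub_eq_sum_powerset]
      refine sum_congr rfl fun t ht => ?_
      rw [prod_ite_prime_dvd fun p hp => Nat.prime_of_mem_primeFactors (mem_powerset.mp ht hp)]
  rw [legendrePhi, natCast_card_filter, sum_congr rfl indicator, sum_comm]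
  refine sum_congr rfl fun t _ => ?_
  rw [← mul_sum, sum_boole, ← Nat.Ioc_filter_dvd_card_eq_div, ← Icc_add_one_left_eq_Ioc, zero_add]

theorem neg_one_pow_mul_div_sub_le (k m d : ℕ) :
    (-1) ^ k * ((m : ℝ) / d) - (1 + (-1) ^ k) / 2 ≤ (-1) ^ k * ((m / d : ℕ) : ℝ) := by
  rcases Nat.even_or_odd k with hk | hk
  · rw [hk.neg_one_pow, ← Nat.floor_div_eq_div (K := ℝ)]
    linarith [Nat.sub_one_lt_floor ((m : ℝ) / d)]
  · rw [hk.neg_one_pow]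
    linarith [Nat.cast_div_le (α := ℝ) (m := m) (n := d)]

theorem sum_powerset_one_add_neg_one_pow_card {ι : Type*} {s : Finset ι} (hs : s.Nonempty) :
    ∑ t ∈ s.powerset, (1 + (-1 : ℝ) ^ #t) / 2 = 2 ^ #s / 2 := by
  have h := congrArg (Int.cast : ℤ → ℝ) (sum_powerset_neg_one_pow_card_of_nonempty hs)
  push_cast at h
  simp [← sum_div, sum_add_distrib, h]

theorem sub_le_legendrePhi (m : ℕ) {n : ℕ} (hP : n.primeFactors.Nonempty) :
    m * ∏ p ∈ n.primeFactors, (1 - 1 / (p : ℝ)) - 2 ^ #n.primeFactors / 2 ≤ legendrePhi m n := by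
  have hn : n ≠ 0 := by rintro rfl; simp at hP
  rw [legendrePhi_eq_sum_powerset m hn, prod_one_sub_eq_sum_powerset, mul_sum,
    ← sum_powerset_one_add_neg_one_pow_card hP, ← sum_sub_distrib]
  refine sum_le_sum fun t _ => le_trans (le_of_eq ?_) (neg_one_pow_mul_div_sub_le #t m (∏ p ∈ t, p))
  rw [Nat.cast_prod, prod_div_distrib, prod_const_one]
  ring

theorem card_le_of_forall_prime_le {P : Finset ℕ} (hP : ∀ p ∈ P, p.Prime) {q : ℕ}
    (hq : ∀ p ∈ P, p ≤ q) : #P ≤ (q + 1) / 2 := by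
  -- `p ↦ (p - 1) / 2` is injective on primes: `2` is the only prime sent to `0`.
  refine (card_le_card_of_injOn (fun p => (p - 1) / 2) (t := range ((q + 1) / 2)) ?_ ?_).trans
    (card_range _).le
  · intro p hp
    have := (hP p hp).two_le
    have := hq p hp
    simp only [coe_range, Set.mem_Iio]
    omega
  · intro p hp p' hp' h
    beta_reduce at h
    have := (hP p hp).two_le
    have := (hP p' hp').two_le
    rcases (hP p hp).eq_two_or_odd' with rfl | ⟨j, rfl⟩ <;>
      rcases (hP p' hp').eq_two_or_odd' with rfl | ⟨j', rfl⟩ <;>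
      omega

theorem prod_one_sub_one_div_nonneg (P : Finset ℕ) : 0 ≤ ∏ p ∈ P, (1 - 1 / (p : ℝ)) :=
  prod_nonneg fun p _ => by simpa [one_div] using Nat.cast_inv_le_one (α := ℝ) p

theorem one_le_four_mul_mul_prod_one_sub_one_div_sq {P : Finset ℕ} (hP : ∀ p ∈ P, p.Prime)
    (hne : P.Nonempty) : 1 ≤ 4 * (2 * #P - 1) * (∏ p ∈ P, (1 - 1 / (p : ℝ))) ^ 2 := by
  induction P using Finset.induction_on_max with
  | empty => simp at hne
  | insert a s ha ih =>
    have has : a ∉ s := fun h => (ha a h).false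
    have ha2 : (2 : ℝ) ≤ a := by exact_mod_cast (hP a (mem_insert_self a s)).two_le
    rw [prod_insert has, card_insert_of_notMem has]
    set x := 1 - 1 / (a : ℝ)
    rcases s.eq_empty_or_nonempty with rfl | hs
    · have : 1 / 2 ≤ x := by
        have : 1 / (a : ℝ) ≤ 1 / 2 := one_div_le_one_div_of_le two_pos ha2
        linarith
      norm_num
      nlinarith
    set k := #s
    have hk : (2 * k + 1 : ℝ) ≤ a := by
      have := card_le_of_forall_prime_le hP
        (fun p hp => (mem_insert.mp hp).elim le_of_eq fun hp => (ha p hp).le)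
      rw [card_insert_of_notMem has] at this
      exact_mod_cast (by omega : 2 * k + 1 ≤ a)
    have hx : 2 * k ≤ (2 * k + 1) * x := by
      have : (2 * k + 1 : ℝ) / a ≤ 1 := (div_le_one (by linarith)).mpr hk
      have : (2 * k + 1) * x = 2 * k + 1 - (2 * k + 1) / a := by ring
      linarith
    -- `((2k + 1) x)² ≥ 4k² > (2k - 1)(2k + 1)`
    have hx2 : 2 * k - 1 ≤ (2 * k + 1) * x ^ 2 := by
      refine le_of_mul_le_mul_left ?_ (by positivity : (0 : ℝ) < 2 * k + 1)
      nlinarith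
    calc (1 : ℝ) ≤ 4 * (2 * k - 1) * (∏ p ∈ s, (1 - 1 / (p : ℝ))) ^ 2 :=
          ih (fun p hp => hP p (mem_insert_of_mem hp)) hs
      _ ≤ 4 * ((2 * k + 1) * x ^ 2) * (∏ p ∈ s, (1 - 1 / (p : ℝ))) ^ 2 := by gcongr
      _ = 4 * (2 * ↑(k + 1) - 1) * (x * ∏ p ∈ s, (1 - 1 / (p : ℝ))) ^ 2 := by push_cast; ring

theorem one_le_two_mul_sqrt_mul_prod_one_sub_one_div {P : Finset ℕ} (hP : ∀ p ∈ P, p.Prime)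
    (hne : P.Nonempty) : 1 ≤ 2 * √(2 * #P - 1) * ∏ p ∈ P, (1 - 1 / (p : ℝ)) := by
  have hcard : (0 : ℝ) ≤ 2 * #P - 1 := by
    have : (1 : ℝ) ≤ #P := by exact_mod_cast hne.card_pos
    linarith
  have := prod_one_sub_one_div_nonneg P
  refine le_of_pow_le_pow_left₀ two_ne_zero (by positivity) ?_
  rw [one_pow, mul_pow, mul_pow, Real.sq_sqrt hcard]
  linarith [one_le_four_mul_mul_prod_one_sub_one_div_sq hP hne]

theorem stmt11_general (n s m : ℕ)
    (hs : n.primeFactors.card = s) (hs2 : 2 ≤ s)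
    (hm : (2 : ℝ) ^ (s + 1) * Real.sqrt (2 * s - 1) ≤ (m : ℝ)) :
    (m : ℝ) / 2 * ∏ p ∈ n.primeFactors, (1 - 1 / (p : ℝ)) ≤ (legendrePhi m n : ℝ) ∧
    (m : ℝ) / 2 * ∏ p ∈ n.primeFactors, (1 - 1 / (p : ℝ)) =
      (m : ℝ) * (Nat.totient n : ℝ) / (2 * n) := by
  have hP : n.primeFactors.Nonempty := card_pos.mp (by omega)
  have hn : (n : ℝ) ≠ 0 := Nat.cast_ne_zero.mpr (by rintro rfl; simp at hP)
  have hprod := one_le_two_mul_sqrt_mul_prod_one_sub_one_div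
    (fun p => Nat.prime_of_mem_primeFactors) hP
  have hlow := sub_le_legendrePhi m hP
  have htotient : (n.totient : ℝ) = n * ∏ p ∈ n.primeFactors, (1 - 1 / (p : ℝ)) := by
    have h := congrArg (Rat.cast : ℚ → ℝ) (Nat.totient_eq_mul_prod_factors n)
    push_cast at h
    simpa only [one_div] using h
  rw [hs] at hprod hlow
  have hmain : (2 : ℝ) ^ s ≤ m * ∏ p ∈ n.primeFactors, (1 - 1 / (p : ℝ)) := calc
    (2 : ℝ) ^ s ≤ 2 ^ s * (2 * √(2 * s - 1) * ∏ p ∈ n.primeFactors, (1 - 1 / (p : ℝ))) :=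
      le_mul_of_one_le_right (by positivity) hprod
    _ = 2 ^ (s + 1) * √(2 * s - 1) * ∏ p ∈ n.primeFactors, (1 - 1 / (p : ℝ)) := by ring
    _ ≤ m * ∏ p ∈ n.primeFactors, (1 - 1 / (p : ℝ)) :=
      mul_le_mul_of_nonneg_right hm (prod_one_sub_one_div_nonneg _)
  constructor
  · linarith
  · rw [htotient]
    field_simp

theorem stmt11 (n s m : ℕ) (hn : 0 < n)
    (hs : n.primeFactors.card = s) (hs2 : 2 ≤ s)
    (hm : (2 : ℝ) ^ (s + 1) * Real.sqrt (2 * s - 1) ≤ (m : ℝ)) :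
    (m : ℝ) / 2 * ∏ p ∈ n.primeFactors, (1 - 1 / (p : ℝ)) ≤ (legendrePhi m n : ℝ) ∧
    (m : ℝ) / 2 * ∏ p ∈ n.primeFactors, (1 - 1 / (p : ℝ)) =
      (m : ℝ) * (Nat.totient n : ℝ) / (2 * n) :=
  stmt11_general n s m hs hs2 hm
end

section
/- Let n be a positive integer with exactly s ≥ 2 distinct prime factors p_1 < p_2 < … < p_s. Then Π_{i=1}^s (1 − 1/p_i) ≥ 1/(2√(2s−1)). -/
open Finset

lemma prodpos12 (P : Finset ℕ) (hP : ∀ p ∈ P, Nat.Prime p) :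
    0 < ∏ p ∈ P, (1 - 1 / (p : ℝ)) := by
  apply Finset.prod_pos
  intro p hp
  have h2 : 2 ≤ p := (hP p hp).two_le
  have h2' : (2:ℝ) ≤ p := by exact_mod_cast h2
  have hp0 : (0:ℝ) < p := by linarith
  rw [sub_pos, div_lt_one hp0]; linarith

lemma card_odd_bound12 (T : Finset ℕ) (M : ℕ) (hodd : ∀ t ∈ T, Odd t ∧ 3 ≤ t)
    (hM : ∀ t ∈ T, t ≤ M) : T.card ≤ M / 2 := by
  have hinj : Set.InjOn (· / 2) T := by
    intro a ha b hb hab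
    obtain ⟨⟨k, hk⟩, _⟩ := hodd a ha
    obtain ⟨⟨l, hl⟩, _⟩ := hodd b hb
    simp only at hab
    omega
  calc T.card = (T.image (· / 2)).card := (Finset.card_image_of_injOn hinj).symm
    _ ≤ (Finset.Icc 1 (M/2)).card := by
        apply Finset.card_le_card
        intro x hx
        simp only [Finset.mem_image] at hx
        obtain ⟨t, ht, rfl⟩ := hx
        obtain ⟨hto, ht3⟩ := hodd t ht
        have := hM t ht
        simp only [Finset.mem_Icc]
        omega
    _ = M / 2 := by simp

lemma max_bound12 (P : Finset ℕ) (hP : ∀ p ∈ P, Nat.Prime p) (h2 : 2 ≤ P.card)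
    (hne : P.Nonempty) : 2 * P.card - 1 ≤ P.max' hne := by
  set M := P.max' hne with hMdef
  have hMmem : M ∈ P := P.max'_mem hne
  have hMprime : Nat.Prime M := hP M hMmem
  have hle : ∀ t ∈ P, t ≤ M := fun t ht => P.le_max' t ht
  have hM3 : 3 ≤ M := by
    by_contra h
    have hM2 : M = 2 := by have := hMprime.two_le; omega
    have : P ⊆ {2} := by
      intro p hp
      have := hle p hp
      have := (hP p hp).two_le
      simp only [Finset.mem_singleton]
      omega
    have := Finset.card_le_card this
    simp at this
    omega
  have hModd : Odd M := hMprime.odd_of_ne_two (by omega)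
  have hT : (P.erase 2).card ≤ M / 2 := by
    apply card_odd_bound12
    · intro t ht
      have htP := Finset.mem_of_mem_erase ht
      have htne : t ≠ 2 := Finset.ne_of_mem_erase ht
      have htp := hP t htP
      exact ⟨htp.odd_of_ne_two htne, by have := htp.two_le; omega⟩
    · intro t ht
      exact hle t (Finset.mem_of_mem_erase ht)
  have hcard : P.card - 1 ≤ (P.erase 2).card := by
    rcases em (2 ∈ P) with h | h
    · rw [Finset.card_erase_of_mem h]
    · rw [Finset.erase_eq_of_notMem h]; omega
  obtain ⟨m, hm⟩ := hModd
  omega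

lemma key12 : ∀ s : ℕ, 1 ≤ s → ∀ P : Finset ℕ, (∀ p ∈ P, Nat.Prime p) → P.card = s →
    1 ≤ 4 * (∏ p ∈ P, (1 - 1 / (p:ℝ)))^2 * (2 * s - 1) := by
  intro s hs
  induction s, hs using Nat.le_induction with
  | base =>
    intro P hP hcard
    obtain ⟨p, rfl⟩ := Finset.card_eq_one.mp hcard
    have hp : Nat.Prime p := hP p (Finset.mem_singleton_self p)
    have h2 : (2:ℝ) ≤ p := by exact_mod_cast hp.two_le
    have hp0 : (0:ℝ) < p := by linarith
    have hhalf : (1:ℝ)/2 ≤ 1 - 1/(p:ℝ) := by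
      have : 1/(p:ℝ) ≤ 1/2 := by
        apply one_div_le_one_div_of_le <;> linarith
      linarith
    simp only [Finset.prod_singleton]
    push_cast
    nlinarith
  | succ s hs ih =>
    intro P hP hcard
    have hne : P.Nonempty := by
      rw [← Finset.card_pos, hcard]; omega
    set M := P.max' hne with hMdef
    have hMmem : M ∈ P := P.max'_mem hne
    have hMbound : 2 * (s + 1) - 1 ≤ M := by
      have := max_bound12 P hP (by omega) hne
      omega
    have hMR : (2 * s + 1 : ℝ) ≤ M := by
      have : 2 * s + 1 ≤ M := by omega
      exact_mod_cast this
    have hMpos : (0:ℝ) < M := by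
      have : 0 < M := by omega
      exact_mod_cast this
    have herase : ∀ p ∈ P.erase M, Nat.Prime p :=
      fun p hp => hP p (Finset.mem_of_mem_erase hp)
    have hcard' : (P.erase M).card = s := by
      rw [Finset.card_erase_of_mem hMmem, hcard]
      omega
    have hIH := ih (P.erase M) herase hcard'
    set y := ∏ p ∈ P.erase M, (1 - 1 / (p:ℝ)) with hy
    have hy0 : 0 < y := prodpos12 _ herase
    have hprod : ∏ p ∈ P, (1 - 1 / (p:ℝ)) = (1 - 1/(M:ℝ)) * y := by
      rw [← Finset.mul_prod_erase P _ hMmem]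
    rw [hprod]
    set c := 1 - 1/(M:ℝ) with hc
    have hsR : (1:ℝ) ≤ s := by exact_mod_cast hs
    have hc1 : (2 * (s:ℝ)) ≤ c * (2 * s + 1) := by
      have h1 : 1/(M:ℝ) ≤ 1/(2*s+1) := by
        apply one_div_le_one_div_of_le <;> linarith
      have h2 : (0:ℝ) < 2 * s + 1 := by linarith
      rw [hc]
      rw [sub_mul, one_mul]
      have : (1/(M:ℝ)) * (2 * s + 1) ≤ 1 := by
        rw [div_mul_eq_mul_div, div_le_one hMpos]
        linarith
      linarith
    have hc0 : 0 < c := by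
      rw [hc, sub_pos, div_lt_one hMpos]; linarith
    push_cast
    nlinarith [sq_nonneg (c * (2*s+1) - 2*s), sq_nonneg y, mul_pos hy0 hy0,
      mul_le_mul hc1 hc1 (by linarith) (by linarith : (0:ℝ) ≤ c * (2*s+1)),
      mul_pos (mul_pos hy0 hy0) hc0]

theorem stmt12 (n : ℕ) (hn : 0 < n) (s : ℕ)
    (hs : n.primeFactors.card = s) (h2 : 2 ≤ s) :
    1 / (2 * Real.sqrt (2 * s - 1)) ≤ ∏ p ∈ n.primeFactors, (1 - 1 / (p : ℝ)) := by
  have hP : ∀ p ∈ n.primeFactors, Nat.Prime p := fun p hp => Nat.prime_of_mem_primeFactors hp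
  have hx0 : 0 < ∏ p ∈ n.primeFactors, (1 - 1 / (p : ℝ)) := prodpos12 _ hP
  set x := ∏ p ∈ n.primeFactors, (1 - 1 / (p : ℝ)) with hx
  have hkey := key12 s (by omega) n.primeFactors hP hs
  have hsR : (2:ℝ) ≤ s := by exact_mod_cast h2
  have hs1 : (1:ℝ) ≤ 2 * s - 1 := by linarith
  have hsqrt : 1/(2*x) ≤ Real.sqrt (2 * s - 1) := by
    rw [Real.le_sqrt (by positivity)]
    · rw [div_pow, div_le_iff₀ (by positivity)]
      ring_nf
      nlinarith
    · linarith
  have hsq0 : 0 < Real.sqrt (2 * s - 1) := Real.sqrt_pos.mpr (by linarith)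
  rw [div_le_iff₀ (by positivity)]
  have h1 : 1 = x * (2 * (1/(2*x))) := by field_simp
  calc (1:ℝ) = x * (2 * (1/(2*x))) := h1
    _ ≤ x * (2 * Real.sqrt (2 * s - 1)) := by
        apply mul_le_mul_of_nonneg_left _ (le_of_lt hx0)
        linarith
end

section
/- Let G be an abelian group, g ∈ G a nonzero element of finite order, k ∈ ℕ_0, and j ∈ [0, ord(g)−1]. Then the set of lengths of factorizations of the zero-sum sequence ((−g)g)^{k·ord(g)+j} into minimal zero-sum sequences equals { 2k + ν(ord(g)−2) + j : ν ∈ [0,k] }; in particular its minimum is 2k + j. -/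
/-- The set of lengths of factorizations of a zero-sum sequence into minimal
zero-sum sequences. -/
def LSet {G : Type*} [AddCommGroup G] (S : Multiset G) : Set ℕ :=
  { n | ∃ F : Multiset (Multiset G),
    (∀ B ∈ F, IsMinZS B) ∧ F.sum = S ∧ Multiset.card F = n }
/-! Every minimal zero-sum sequence supported on `{g, -g}` is `(-g)g`, `g^n` or `(-g)^n`, where
`n = ord g`. A factorization with `t` atoms `(-g)g` must use the long atoms `g^n` and `(-g)^n`
equally often, say `u` times each (when `g = -g` all three atoms coincide), so `t + u n = k n + j`
and the length is `t + 2u`. As `j < n` this forces `u ≤ k`, and `ν = k - u` gives the length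
`2k + ν(n - 2) + j`; conversely every such `t, u` is realized. -/

open Multiset

theorem Multiset.exists_eq_replicate_add_replicate_add_replicate {α : Type*} {a b c : α}
    {F : Multiset α} (h : ∀ x ∈ F, x = a ∨ x = b ∨ x = c) :
    ∃ t u v, F = replicate t a + replicate u b + replicate v c := by
  induction F using Multiset.induction with
  | empty => exact ⟨0, 0, 0, by simp⟩
  | cons x F ih =>
    obtain ⟨t, u, v, rfl⟩ := ih fun y hy => h y (mem_cons_of_mem hy)
    rcases h x (mem_cons_self x _) with rfl | rfl | rfl
    · exact ⟨t + 1, u, v, by rw [replicate_succ, cons_add, cons_add]⟩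
    · exact ⟨t, u + 1, v, by rw [replicate_succ, ← singleton_add, ← singleton_add]; abel⟩
    · exact ⟨t, u, v + 1, by rw [replicate_succ, ← singleton_add, ← singleton_add]; abel⟩

section ZeroSumSequences

variable {G : Type*} [AddCommGroup G]

theorem IsMinZS.eq_of_le {B T : Multiset G} (hB : IsMinZS B) (hle : T ≤ B) (hT : T ≠ 0)
    (hsum : T.sum = 0) : T = B :=
  not_not.mp fun hne => hB.2.2 T hle hT hne hsum

theorem isMinZS_pair {g : G} (hg : g ≠ 0) : IsMinZS ({g, -g} : Multiset G) := by
  refine ⟨by simp, by simp, fun T hle hT hne hsum => ?_⟩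
  have hcard : card T = 1 := by
    have h2 : card T ≤ 2 := by simpa using card_le_card hle
    have h1 : card T ≠ 2 := fun h => hne (eq_of_le_of_card_le hle (by simp [h]))
    have h0 : card T ≠ 0 := by simpa using hT
    omega
  obtain ⟨x, rfl⟩ := card_eq_one.mp hcard
  have hx : x = g ∨ x = -g := by simpa using mem_of_le hle (mem_singleton_self x)
  rcases hx with rfl | rfl <;> simp_all

theorem isMinZS_replicate_addOrderOf {x : G} (hx : 0 < addOrderOf x) :
    IsMinZS (replicate (addOrderOf x) x) := by
  refine ⟨fun h => by simpa [hx.ne'] using congrArg card h, by simp [addOrderOf_nsmul_eq_zero],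
    fun T hle hT hne hsum => hne ?_⟩
  obtain ⟨c, hc, rfl⟩ := le_replicate_iff.mp hle
  have hc0 : 0 < c := Nat.pos_of_ne_zero (by rintro rfl; simp at hT)
  rw [sum_replicate] at hsum
  rw [le_antisymm hc (addOrderOf_le_of_nsmul_eq_zero hc0 hsum)]

theorem IsMinZS.eq_replicate_addOrderOf {B : Multiset G} {x : G} (hB : IsMinZS B)
    (hBx : ∀ y ∈ B, y = x) : B = replicate (addOrderOf x) x := by
  obtain ⟨c, rfl⟩ : ∃ c, B = replicate c x := ⟨_, eq_replicate_card.mpr hBx⟩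
  have hc : 0 < c := Nat.pos_of_ne_zero fun h => hB.1 (by simp [h])
  have hcx : c • x = 0 := by simpa using hB.2.1
  have hpos : 0 < addOrderOf x :=
    (isOfFinAddOrder_iff_nsmul_eq_zero.mpr ⟨c, hc, hcx⟩).addOrderOf_pos
  exact (hB.eq_of_le ((replicate_le_replicate _).mpr (addOrderOf_le_of_nsmul_eq_zero hc hcx))
    (fun h => by simpa [hpos.ne'] using congrArg card h) (by simp [addOrderOf_nsmul_eq_zero])).symm

theorem IsMinZS.eq_pair_or_replicate {B : Multiset G} {g : G} (hB : IsMinZS B)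
    (hBg : ∀ x ∈ B, x = g ∨ x = -g) :
    B = {g, -g} ∨ B = replicate (addOrderOf g) g ∨ B = replicate (addOrderOf g) (-g) := by
  by_cases hboth : g ∈ B ∧ -g ∈ B ∧ g ≠ -g
  · obtain ⟨hg, hng, hne⟩ := hboth
    refine .inl (hB.eq_of_le ?_ (by simp) (by simp)).symm
    exact (le_iff_subset (by simp [hne])).mpr (by simp [subset_iff, hg, hng])
  by_cases hneg : -g ∈ B ∧ g ∉ B
  · refine .inr (.inr ?_)
    rw [← addOrderOf_neg g]
    exact hB.eq_replicate_addOrderOf fun y hy =>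
      (hBg y hy).resolve_left (by rintro rfl; exact hneg.2 hy)
  · refine .inr (.inl (hB.eq_replicate_addOrderOf fun y hy => ?_))
    rcases hBg y hy with rfl | rfl
    · rfl
    · have hg : g ∈ B := by tauto
      tauto

theorem sum_replicate_pair_add_replicate_add_replicate (g : G) (n t u v : ℕ) :
    (replicate t ({g, -g} : Multiset G) + replicate u (replicate n g) +
        replicate v (replicate n (-g))).sum =
      replicate (t + u * n) g + replicate (t + v * n) (-g) := by
  simp only [sum_add, sum_replicate, nsmul_replicate, insert_eq_cons, ← singleton_add, nsmul_add,
    nsmul_singleton, replicate_add]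
  abel

theorem lSet_replicate_add_replicate_neg {g : G} (hg : g ≠ 0) (hfin : 0 < addOrderOf g)
    (m : ℕ) :
    LSet (replicate m g + replicate m (-g)) =
      {L | ∃ t u, t + u * addOrderOf g = m ∧ L = t + 2 * u} := by
  ext L
  constructor
  · rintro ⟨F, hF, hsum, rfl⟩
    have hatoms : ∀ B ∈ F, B = {g, -g} ∨ B = replicate (addOrderOf g) g ∨
        B = replicate (addOrderOf g) (-g) := fun B hB =>
      (hF B hB).eq_pair_or_replicate fun x hx => by
        have hx' := mem_of_le (le_sum_of_mem hB) hx
        rw [hsum] at hx'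
        exact (mem_add.mp hx').imp eq_of_mem_replicate eq_of_mem_replicate
    obtain ⟨t, u, v, rfl⟩ := exists_eq_replicate_add_replicate_add_replicate hatoms
    rw [sum_replicate_pair_add_replicate_add_replicate] at hsum
    simp only [card_add, card_replicate]
    by_cases hneg : g = -g
    · have h2 : addOrderOf g = 2 :=
        addOrderOf_eq_prime (by rw [two_nsmul]; nth_rw 2 [hneg]; simp) hg
      have hcard := congrArg card hsum
      simp only [card_add, card_replicate, h2] at hcard
      exact ⟨t + u + v, 0, by omega, by omega⟩
    · classical
      have hcount := congrArg (count g) hsum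
      have hcount' := congrArg (count (-g)) hsum
      simp only [count_add, count_replicate_self, count_replicate, hneg, Ne.symm hneg, ↓reduceIte,
        add_zero, zero_add] at hcount hcount'
      have huv : u = v := Nat.eq_of_mul_eq_mul_right hfin (by omega)
      exact ⟨t, u, hcount, by omega⟩
  · rintro ⟨t, u, rfl, rfl⟩
    refine ⟨replicate t {g, -g} + replicate u (replicate (addOrderOf g) g) +
      replicate u (replicate (addOrderOf g) (-g)), ?_,
      sum_replicate_pair_add_replicate_add_replicate .., by
        simp only [card_add, card_replicate]; ring⟩
    simp only [mem_add, mem_replicate]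
    rintro B ((⟨-, rfl⟩ | ⟨-, rfl⟩) | ⟨-, rfl⟩)
    · exact isMinZS_pair hg
    · exact isMinZS_replicate_addOrderOf hfin
    · simpa using isMinZS_replicate_addOrderOf (x := -g) (by simpa using hfin)

end ZeroSumSequences

theorem setOf_add_two_mul_eq_of_lt {n k j : ℕ} (hn : 2 ≤ n) (hj : j < n) :
    {L | ∃ t u, t + u * n = k * n + j ∧ L = t + 2 * u} =
      {L | ∃ ν ≤ k, L = 2 * k + ν * (n - 2) + j} := by
  obtain ⟨n, rfl⟩ := Nat.exists_eq_add_of_le' hn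
  simp only [Nat.add_sub_cancel]
  ext L
  constructor
  · rintro ⟨t, u, h, rfl⟩
    have hu : u ≤ k := by
      by_contra! hk
      nlinarith
    obtain ⟨ν, rfl⟩ := Nat.exists_eq_add_of_le hu
    exact ⟨ν, Nat.le_add_left ν u, by nlinarith⟩
  · rintro ⟨ν, hν, rfl⟩
    obtain ⟨u, rfl⟩ := Nat.exists_eq_add_of_le hν
    exact ⟨ν * (n + 2) + j, u, by ring, by ring⟩

theorem stmt15 (G : Type*) [AddCommGroup G] (g : G) (hg : g ≠ 0)
    (hfin : 0 < addOrderOf g) (k j : ℕ) (hj : j ≤ addOrderOf g - 1) :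
    LSet (Multiset.replicate (k * addOrderOf g + j) g +
        Multiset.replicate (k * addOrderOf g + j) (-g)) =
      { n | ∃ ν ≤ k, n = 2 * k + ν * (addOrderOf g - 2) + j } ∧
    sInf (LSet (Multiset.replicate (k * addOrderOf g + j) g +
        Multiset.replicate (k * addOrderOf g + j) (-g))) = 2 * k + j := by
  have hn : 2 ≤ addOrderOf g := by
    have : addOrderOf g ≠ 1 := fun h => hg (AddMonoid.addOrderOf_eq_one_iff.mp h)
    omega
  have hL := lSet_replicate_add_replicate_neg hg hfin (k * addOrderOf g + j)
  rw [setOf_add_two_mul_eq_of_lt hn (by omega)] at hL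
  refine ⟨hL, hL ▸ IsLeast.csInf_eq ⟨⟨0, Nat.zero_le k, by simp⟩, ?_⟩⟩
  rintro _ ⟨ν, -, rfl⟩
  omega
end

section
/- Let G be a finite abelian group, r ∈ ℕ even, and (e_1,…,e_r) ∈ G^r independent with gcd(ord(e_i), ord(e_j)) > 1 for all i,j. Set e_0 = −e_1 − ⋯ − e_r and ē = Σ_{i=1}^r (−1)^{i+1} e_i. Then U = ē · Π_{i odd}(−e_0 − e_i) · Π_{i even}(e_0 + e_i) is a minimal zero-sum sequence over G. -/
open Finset

theorem Multiset.exists_le_map_eq_of_le_map {α β : Type*} [DecidableEq β] (f : α → β)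
    {s : Multiset α} {t : Multiset β} (h : t ≤ s.map f) : ∃ u ≤ s, u.map f = t := by
  induction s using Multiset.induction generalizing t with
  | empty => exact ⟨0, le_rfl, by simp_all⟩
  | cons a s ih =>
    rw [map_cons] at h
    by_cases hat : f a ∈ t
    · obtain ⟨u, hu, hut⟩ := ih (by simpa using erase_le_erase (f a) h)
      exact ⟨a ::ₘ u, cons_le_cons a hu, by rw [map_cons, hut, cons_erase hat]⟩
    · obtain ⟨u, hu, rfl⟩ := ih ((le_cons_of_notMem hat).1 h)
      exact ⟨u, hu.trans (le_cons_self s a), rfl⟩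

theorem Finset.exists_subset_map_val_eq_of_le {α β : Type*} [DecidableEq β] (f : α → β)
    {s : Finset α} {t : Multiset β} (h : t ≤ s.val.map f) : ∃ A ⊆ s, A.val.map f = t := by
  obtain ⟨u, hu, rfl⟩ := Multiset.exists_le_map_eq_of_le_map f h
  have hnodup := Multiset.nodup_of_le hu s.nodup
  exact ⟨⟨u, hnodup⟩, (Multiset.le_iff_subset hnodup).1 hu, rfl⟩

theorem Int.not_isUnit_sub_of_one_lt_gcd {m n : ℕ} (h : 1 < m.gcd n) {a b : ℤ}
    (ha : (m : ℤ) ∣ a) (hb : (n : ℤ) ∣ b) : ¬IsUnit (a - b) := by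
  intro hu
  have hdvd : ((m.gcd n : ℕ) : ℤ) ∣ a - b :=
    dvd_sub ((Int.natCast_dvd_natCast.2 (Nat.gcd_dvd_left m n)).trans ha)
      ((Int.natCast_dvd_natCast.2 (Nat.gcd_dvd_right m n)).trans hb)
  rw [Int.natCast_dvd, Int.isUnit_iff_natAbs_eq.1 hu, Nat.dvd_one] at hdvd
  omega

theorem Finset.eq_empty_of_forall_dvd_sum_sub {ι : Type*} [Fintype ι] [DecidableEq ι]
    {u : ι → ℤ} (hu : ∀ i, IsUnit (u i)) (hsum : ∑ i, u i = 0) {n : ι → ℕ}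
    (hn : ∀ i j, 1 < (n i).gcd (n j)) {A : Finset ι}
    (hdvd : ∀ i, (n i : ℤ) ∣ ∑ j ∈ A, u j - if i ∈ A then u i else 0) : A = ∅ := by
  by_contra hA
  obtain ⟨i₀, hi₀⟩ := nonempty_iff_ne_empty.2 hA
  have hA_univ : A = univ := by
    refine eq_univ_of_forall fun j => by_contra fun hj => ?_
    have := Int.not_isUnit_sub_of_one_lt_gcd (hn i₀ j) (hdvd i₀) (hdvd j)
    simp [hi₀, hj, hu i₀] at this
  have := Int.not_isUnit_sub_of_one_lt_gcd (hn i₀ i₀) (hdvd i₀) (dvd_zero _)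
  simp [hA_univ, hsum, hu i₀] at this

theorem Finset.sum_zsmul_sum_sub {ι G : Type*} [Fintype ι] [DecidableEq ι] [AddCommGroup G]
    (u : ι → ℤ) (e : ι → G) (A : Finset ι) :
    ∑ i ∈ A, u i • (∑ j, e j - e i) = ∑ i, (∑ j ∈ A, u j - if i ∈ A then u i else 0) • e i := by
  simp only [smul_sub, sum_sub_distrib, sub_smul, ← sum_smul, ← smul_sum, ite_smul, zero_smul,
    sum_ite_mem, univ_inter]

theorem isMinZS_cons {G : Type*} [AddCommGroup G] {x : G} {M : Multiset G}
    (hsum : (x ::ₘ M).sum = 0) (hM : ∀ T ≤ M, T.sum = 0 → T = 0) : IsMinZS (x ::ₘ M) := by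
  classical
  refine ⟨Multiset.cons_ne_zero, hsum, fun T hT hT0 hTS hTsum => ?_⟩
  by_cases hx : x ∈ T
  · have hcompl : x ::ₘ M - T ≤ M :=
      calc x ::ₘ M - T ≤ x ::ₘ M - {x} := tsub_le_tsub_left (Multiset.singleton_le.2 hx) _
        _ = M := by simp
    have hcompl_sum : (x ::ₘ M - T).sum = 0 := by
      have := congrArg Multiset.sum (tsub_add_cancel_of_le hT)
      rwa [Multiset.sum_add, hTsum, add_zero, hsum] at this
    exact hTS (le_antisymm hT (tsub_eq_zero_iff_le.1 (hM _ hcompl hcompl_sum)))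
  · exact hT0 (hM T ((Multiset.le_cons_of_notMem hx).1 hT) hTsum)

theorem isMinZS_cons_map_zsmul_sum_sub {ι G : Type*} [Fintype ι] [AddCommGroup G]
    {u : ι → ℤ} (hu : ∀ i, IsUnit (u i)) (hsum : ∑ i, u i = 0) {e : ι → G}
    (hindep : ∀ c : ι → ℤ, ∑ i, c i • e i = 0 → ∀ i, c i • e i = 0)
    (hgcd : ∀ i j, 1 < (addOrderOf (e i)).gcd (addOrderOf (e j))) :
    IsMinZS ((∑ i, u i • e i) ::ₘ univ.val.map fun i => u i • (∑ j, e j - e i)) := by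
  classical
  refine isMinZS_cons ?_ fun T hT hTsum => ?_
  · rw [Multiset.sum_cons, ← Finset.sum, sum_zsmul_sum_sub]
    simp [hsum]
  · obtain ⟨A, -, rfl⟩ := exists_subset_map_val_eq_of_le _ hT
    rw [← Finset.sum, sum_zsmul_sum_sub] at hTsum
    have hA : A = ∅ := eq_empty_of_forall_dvd_sum_sub hu hsum hgcd fun i =>
      addOrderOf_dvd_iff_zsmul_eq_zero.2 (hindep _ hTsum i)
    simp [hA]

/- Indices: `i : Fin r` corresponds to the index `i+1 ∈ [1,r]` of the paper, so
the paper's odd indices are those with `Even (i : ℕ)`.  With `e₀ = -∑ e j`, the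
entry `-e₀ - eᵢ` equals `(∑ j, e j) - eᵢ` and `e₀ + eᵢ` equals `eᵢ - ∑ j, e j`,
and `ē = ∑ i, (-1)^i • eᵢ`. -/
theorem stmt16_general (G : Type*) [AddCommGroup G]
    (r : ℕ) (hr : Even r) (e : Fin r → G)
    (hindep : ∀ c : Fin r → ℤ, ∑ i, c i • e i = 0 → ∀ i, c i • e i = 0)
    (hgcd : ∀ i j, 1 < Nat.gcd (addOrderOf (e i)) (addOrderOf (e j))) :
    IsMinZS ((∑ i : Fin r, (-1 : ℤ) ^ (i : ℕ) • e i) ::ₘ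
      ∑ i : Fin r,
        (if Even (i : ℕ) then {(∑ j, e j) - e i} else {e i - ∑ j, e j} :
          Multiset G)) := by
  have hu : ∀ i : Fin r, IsUnit ((-1 : ℤ) ^ (i : ℕ)) := fun i => isUnit_one.neg.pow _
  have hsum : ∑ i : Fin r, (-1 : ℤ) ^ (i : ℕ) = 0 := by
    rw [Fin.sum_univ_eq_sum_range (fun m => (-1 : ℤ) ^ m), neg_one_geom_sum, if_pos hr]
  convert isMinZS_cons_map_zsmul_sum_sub hu hsum hindep hgcd using 2
  rw [← Multiset.sum_map_singleton (Multiset.map _ _), Multiset.map_map]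
  refine sum_congr rfl fun i _ => ?_
  rcases Nat.even_or_odd i with hi | hi
  · simp [hi, hi.neg_one_pow]
  · simp [hi.neg_one_pow, Nat.not_even_iff_odd.2 hi]

theorem stmt16 (G : Type*) [AddCommGroup G] [Fintype G]
    (r : ℕ) (hr : Even r) (hr0 : 0 < r) (e : Fin r → G)
    (hne : ∀ i, e i ≠ 0)
    (hindep : ∀ c : Fin r → ℤ, ∑ i, c i • e i = 0 → ∀ i, c i • e i = 0)
    (hgcd : ∀ i j, 1 < Nat.gcd (addOrderOf (e i)) (addOrderOf (e j))) :
    IsMinZS ((∑ i : Fin r, (-1 : ℤ) ^ (i : ℕ) • e i) ::ₘ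
      ∑ i : Fin r,
        (if Even (i : ℕ) then {(∑ j, e j) - e i} else {e i - ∑ j, e j} :
          Multiset G)) :=
  stmt16_general G r hr e hindep hgcd
end

section
/- Let G = C_3 ⊕ C_3 with basis (e_1, e_2). Consider the zero-sum sequence W = (−e_1−e_2)^8 (e_1−e_2)^5 (e_2−e_1)^4 (−e_1)^2 over G of length 19. Then min L(W) ≥ 6, i.e., every factorization of W into minimal zero-sum sequences uses at least 6 factors. -/
theorem stmt17 (G : Type*) [AddCommGroup G] (e1 e2 : G)
    (h1 : addOrderOf e1 = 3) (h2 : addOrderOf e2 = 3)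
    (hindep : ∀ a b : ℤ, a • e1 + b • e2 = 0 → a • e1 = 0 ∧ b • e2 = 0)
    (hspan : ∀ g : G, ∃ a b : ℤ, g = a • e1 + b • e2) :
    ∀ F : Multiset (Multiset G), (∀ B ∈ F, IsMinZS B) →
      F.sum = Multiset.replicate 8 (-e1 - e2) + Multiset.replicate 5 (e1 - e2) +
        Multiset.replicate 4 (e2 - e1) + Multiset.replicate 2 (-e1) →
      6 ≤ Multiset.card F := by
  classical
  intro F hminZS hsum
  have he1 : ∀ n : ℤ, n • e1 = 0 ↔ (3:ℤ) ∣ n := by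
    intro n
    have := (addOrderOf_dvd_iff_zsmul_eq_zero (x := e1) (i := n))
    rw [h1] at this
    exact_mod_cast this.symm
  have he2 : ∀ n : ℤ, n • e2 = 0 ↔ (3:ℤ) ∣ n := by
    intro n
    have := (addOrderOf_dvd_iff_zsmul_eq_zero (x := e2) (i := n))
    rw [h2] at this
    exact_mod_cast this.symm
  set g1 : G := -e1 - e2 with hg1
  set g2 : G := e1 - e2 with hg2
  set g3 : G := e2 - e1 with hg3
  set g4 : G := -e1 with hg4
  have hne : ∀ u v : G, ∀ p q : ℤ, (p • e1 + q • e2 = v - u) →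
      (¬ (3:ℤ) ∣ p ∨ ¬ (3:ℤ) ∣ q) → u ≠ v := by
    intro u v p q hpq hnd heq
    rw [heq, sub_self] at hpq
    obtain ⟨hp, hq⟩ := hindep p q hpq
    rcases hnd with h | h
    · exact h ((he1 p).mp hp)
    · exact h ((he2 q).mp hq)
  have d12 : g1 ≠ g2 := hne g1 g2 2 0 (by rw [hg1, hg2]; module) (Or.inl (by omega))
  have d13 : g1 ≠ g3 := hne g1 g3 0 2 (by rw [hg1, hg3]; module) (Or.inr (by omega))
  have d14 : g1 ≠ g4 := hne g1 g4 0 1 (by rw [hg1, hg4]; module) (Or.inr (by omega))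
  have d23 : g2 ≠ g3 := hne g2 g3 (-2) 2 (by rw [hg2, hg3]; module) (Or.inl (by omega))
  have d24 : g2 ≠ g4 := hne g2 g4 (-2) 1 (by rw [hg2, hg4]; module) (Or.inl (by omega))
  have d34 : g3 ≠ g4 := hne g3 g4 0 (-1) (by rw [hg3, hg4]; module) (Or.inr (by omega))
  have d21 := d12.symm
  have d31 := d13.symm
  have d41 := d14.symm
  have d32 := d23.symm
  have d42 := d24.symm
  have d43 := d34.symm
  -- sum of a generic replicate-combination
  have hrepsum : ∀ a b c d : ℕ,
      (Multiset.replicate a g1 + Multiset.replicate b g2 + Multiset.replicate c g3 +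
        Multiset.replicate d g4).sum = ((b:ℤ) - a - c - d) • e1 + ((c:ℤ) - a - b) • e2 := by
    intro a b c d
    rw [Multiset.sum_add, Multiset.sum_add, Multiset.sum_add, Multiset.sum_replicate,
      Multiset.sum_replicate, Multiset.sum_replicate, Multiset.sum_replicate,
      hg1, hg2, hg3, hg4]
    simp only [← natCast_zsmul]
    module
  have ccount : ∀ (x : G) (a b c d : ℕ), Multiset.count x
      (Multiset.replicate a g1 + Multiset.replicate b g2 + Multiset.replicate c g3 +
        Multiset.replicate d g4) = (if g1 = x then a else 0) + (if g2 = x then b else 0) +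
        (if g3 = x then c else 0) + (if g4 = x then d else 0) := by
    intro x a b c d
    simp only [Multiset.count_add, Multiset.count_replicate]
  -- per-block bound: count g1 + count g2 + count g3 ≤ 3
  have key : ∀ B ∈ F, B.count g1 + B.count g2 + B.count g3 ≤ 3 := by
    intro B hB
    obtain ⟨hB0, hBsum, hBmin⟩ := hminZS B hB
    have hBle : B ≤ F.sum := by
      obtain ⟨F', rfl⟩ := Multiset.exists_cons_of_mem hB
      rw [Multiset.sum_cons]
      exact Multiset.le_add_right B F'.sum
    rw [hsum] at hBle
    have hcount : ∀ x : G, Multiset.count x B ≤ Multiset.count x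
        (Multiset.replicate 8 g1 + Multiset.replicate 5 g2 + Multiset.replicate 4 g3 +
          Multiset.replicate 2 g4) := fun x => Multiset.count_le_of_le x hBle
    have hd2 : B.count g4 ≤ 2 := by
      have h' := hcount g4
      rw [ccount] at h'
      simpa [d14, d24, d34] using h'
    have hBrep : B = Multiset.replicate (B.count g1) g1 + Multiset.replicate (B.count g2) g2 +
        Multiset.replicate (B.count g3) g3 + Multiset.replicate (B.count g4) g4 := by
      refine Multiset.ext.mpr fun x => ?_
      rw [ccount]
      by_cases e1' : x = g1
      · subst e1'; simp [d21, d31, d41]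
      · by_cases e2' : x = g2
        · subst e2'; simp [d12, d32, d42]
        · by_cases e3' : x = g3
          · subst e3'; simp [d13, d23, d43]
          · by_cases e4' : x = g4
            · subst e4'; simp [d14, d24, d34]
            · have hx := hcount x
              rw [ccount] at hx
              simp only [if_neg (Ne.symm e1'), if_neg (Ne.symm e2'), if_neg (Ne.symm e3'),
                if_neg (Ne.symm e4'), add_zero] at hx ⊢
              omega
    have hBsum' := hBsum
    rw [hBrep, hrepsum] at hBsum'
    obtain ⟨hz1, hz2⟩ := hindep _ _ hBsum'
    have hdiv1 : (3:ℤ) ∣ ((B.count g2 : ℤ) - B.count g1 - B.count g3 - B.count g4) :=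
      (he1 _).mp hz1
    have hdiv2 : (3:ℤ) ∣ ((B.count g3 : ℤ) - B.count g1 - B.count g2) := (he2 _).mp hz2
    -- subvector principle
    have hsub : ∀ a' b' c' d' : ℕ, a' ≤ B.count g1 → b' ≤ B.count g2 → c' ≤ B.count g3 →
        d' ≤ B.count g4 → 0 < a' + b' + c' + d' →
        (3:ℤ) ∣ ((b':ℤ) - a' - c' - d') → (3:ℤ) ∣ ((c':ℤ) - a' - b') →
        B.count g1 = a' ∧ B.count g2 = b' ∧ B.count g3 = c' ∧ B.count g4 = d' := by
      intro a' b' c' d' ha' hb' hc' hd' hpos hdv1 hdv2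
      set T := Multiset.replicate a' g1 + Multiset.replicate b' g2 + Multiset.replicate c' g3 +
        Multiset.replicate d' g4 with hT
      have hTle : T ≤ B := by
        rw [hBrep]
        exact add_le_add (add_le_add (add_le_add
          ((Multiset.replicate_le_replicate g1).mpr ha')
          ((Multiset.replicate_le_replicate g2).mpr hb'))
          ((Multiset.replicate_le_replicate g3).mpr hc'))
          ((Multiset.replicate_le_replicate g4).mpr hd')
      have hTsum : T.sum = 0 := by
        rw [hT, hrepsum, (he1 _).mpr hdv1, (he2 _).mpr hdv2, add_zero]
      have hT0 : T ≠ 0 := by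
        intro h0
        have hc : Multiset.card T = a' + b' + c' + d' := by simp [hT]
        rw [h0] at hc
        simp at hc
        omega
      have hTB : T = B := by
        by_contra hne'
        exact hBmin T hTle hT0 hne' hTsum
      have hcnt : ∀ x, Multiset.count x T = Multiset.count x B := fun x => by rw [hTB]
      refine ⟨?_, ?_, ?_, ?_⟩
      · have h' := hcnt g1
        rw [hT, ccount] at h'
        simp [d21, d31, d41] at h'
        exact h'.symm
      · have h' := hcnt g2
        rw [hT, ccount] at h'
        simp [d12, d32, d42] at h'
        exact h'.symm
      · have h' := hcnt g3
        rw [hT, ccount] at h'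
        simp [d13, d23, d43] at h'
        exact h'.symm
      · have h' := hcnt g4
        rw [hT, ccount] at h'
        simp [d14, d24, d34] at h'
        exact h'.symm
    have H1 : 3 ≤ B.count g1 →
        B.count g1 = 3 ∧ B.count g2 = 0 ∧ B.count g3 = 0 ∧ B.count g4 = 0 := fun h =>
      hsub 3 0 0 0 h (Nat.zero_le _) (Nat.zero_le _) (Nat.zero_le _) (by omega)
        (by norm_num) (by norm_num)
    have H2 : 3 ≤ B.count g2 →
        B.count g1 = 0 ∧ B.count g2 = 3 ∧ B.count g3 = 0 ∧ B.count g4 = 0 := fun h =>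
      hsub 0 3 0 0 (Nat.zero_le _) h (Nat.zero_le _) (Nat.zero_le _) (by omega)
        (by norm_num) (by norm_num)
    have H3 : 3 ≤ B.count g3 →
        B.count g1 = 0 ∧ B.count g2 = 0 ∧ B.count g3 = 3 ∧ B.count g4 = 0 := fun h =>
      hsub 0 0 3 0 (Nat.zero_le _) (Nat.zero_le _) h (Nat.zero_le _) (by omega)
        (by norm_num) (by norm_num)
    have H4 : 1 ≤ B.count g2 ∧ 1 ≤ B.count g3 →
        B.count g1 = 0 ∧ B.count g2 = 1 ∧ B.count g3 = 1 ∧ B.count g4 = 0 := fun h =>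
      hsub 0 1 1 0 (Nat.zero_le _) h.1 h.2 (Nat.zero_le _) (by omega)
        (by norm_num) (by norm_num)
    have H5 : 1 ≤ B.count g1 ∧ 1 ≤ B.count g3 ∧ 1 ≤ B.count g4 →
        B.count g1 = 1 ∧ B.count g2 = 0 ∧ B.count g3 = 1 ∧ B.count g4 = 1 := fun h =>
      hsub 1 0 1 1 h.1 (Nat.zero_le _) h.2.1 h.2.2 (by omega)
        (by norm_num) (by norm_num)
    omega
  -- total count of non-g4 elements is 17
  have hx : ∀ x : G, (F.map (fun B => Multiset.count x B)).sum = Multiset.count x F.sum := by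
    intro x
    conv_rhs => rw [← Multiset.map_id F]
    rw [Multiset.count_sum]
    rfl
  have htot : (F.map (fun B => B.count g1 + B.count g2 + B.count g3)).sum = 17 := by
    have hsplit : (F.map (fun B => B.count g1 + B.count g2 + B.count g3)).sum =
        (F.map (fun B => B.count g1)).sum + (F.map (fun B => B.count g2)).sum +
          (F.map (fun B => B.count g3)).sum := by
      rw [← Multiset.sum_map_add, ← Multiset.sum_map_add]
    rw [hsplit, hx g1, hx g2, hx g3, hsum, ccount, ccount, ccount]
    simp [d12, d13, d14, d21, d23, d24, d31, d32, d34, d41, d42, d43]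
  have hle : (F.map (fun B => B.count g1 + B.count g2 + B.count g3)).sum ≤
      Multiset.card F • 3 := by
    have h' := Multiset.sum_le_card_nsmul
      (F.map fun B => B.count g1 + B.count g2 + B.count g3) 3 ?_
    · simpa [Multiset.card_map] using h'
    · intro x hxm
      obtain ⟨B, hB, rfl⟩ := Multiset.mem_map.mp hxm
      exact key B hB
  rw [htot, smul_eq_mul] at hle
  omega
end

section
/- Let G be a cyclic group of order n ≥ 5, let q ∈ [2, n−2] with gcd(q,n) = 1, write n = qm + j with m ≥ 1 and j ∈ [1, q], and let g be a generator of G. Then the sequences U = (qg)^n, U_0 = g^n, U_1 = (−g)g, V = (qg)g^{n−q}, V' = (qg)(−g)^q are minimal zero-sum sequences over G, and V^{n−m}(V')^m = U·U_1^{qm}·U_0^{n−q−m} as sequences; moreover the distance between these two factorizations is n + (q−1)(m−1), giving t(G) ≥ n + (q−1)(m−1) for the tame degree of the block monoid B(G). -/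
open Multiset

lemma decomp_two {α : Type*} [DecidableEq α] (x y : α) (hxy : x ≠ y) (T : Multiset α)
    (hT : ∀ a ∈ T, a = x ∨ a = y) :
    T = Multiset.replicate (T.count x) x + Multiset.replicate (T.count y) y := by
  ext a
  rw [count_add, count_replicate, count_replicate]
  by_cases hax : a = x
  · subst hax; simp [hxy, Ne.symm hxy]
  by_cases hay : a = y
  · subst hay; simp [hxy, Ne.symm hxy]
  · have : a ∉ T := fun h => by rcases hT a h with h | h <;> simp_all
    simp [Ne.symm hax, Ne.symm hay, count_eq_zero.2 this]

lemma decomp_three {α : Type*} [DecidableEq α] (x y z : α) (hxy : x ≠ y) (hxz : x ≠ z)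
    (hyz : y ≠ z) (T : Multiset α) (hT : ∀ a ∈ T, a = x ∨ a = y ∨ a = z) :
    T = Multiset.replicate (T.count x) x + Multiset.replicate (T.count y) y
      + Multiset.replicate (T.count z) z := by
  ext a
  rw [count_add, count_add, count_replicate, count_replicate, count_replicate]
  by_cases hax : a = x
  · subst hax; simp [hxy, Ne.symm hxy, hxz, Ne.symm hxz]
  by_cases hay : a = y
  · subst hay; simp [hxy, Ne.symm hxy, hyz, Ne.symm hyz]
  by_cases haz : a = z
  · subst haz; simp [hxz, Ne.symm hxz, hyz, Ne.symm hyz]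
  · have : a ∉ T := fun h => by rcases hT a h with h | h | h <;> simp_all
    simp [Ne.symm hax, Ne.symm hay, Ne.symm haz, count_eq_zero.2 this]

section
variable {G : Type*} [AddCommGroup G] [DecidableEq G]

lemma nsmul_ne' {g : G} {n : ℕ} (hg : addOrderOf g = n) {k : ℕ} (h0 : 0 < k) (hk : k < n) :
    k • g ≠ 0 := by
  intro h
  have := addOrderOf_dvd_of_nsmul_eq_zero h
  rw [hg] at this
  exact absurd (Nat.le_of_dvd h0 this) (not_le.2 hk)

lemma smul_inj' {g : G} {n : ℕ} (hg : addOrderOf g = n) {a b : ℕ} (ha : a < n) (hb : b < n)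
    (h : a • g = b • g) : a = b := by
  rcases le_total a b with hab | hab
  · by_contra hne
    have h0 : 0 < b - a := Nat.sub_pos_of_lt (lt_of_le_of_ne hab hne)
    have : (b - a) • g = 0 := by rw [sub_nsmul g hab, ← h]; simp
    exact nsmul_ne' hg h0 (lt_of_le_of_lt (Nat.sub_le _ _) hb) this
  · by_contra hne
    have h0 : 0 < a - b := Nat.sub_pos_of_lt (lt_of_le_of_ne hab (Ne.symm hne))
    have : (a - b) • g = 0 := by rw [sub_nsmul g hab, h]; simp
    exact nsmul_ne' hg h0 (lt_of_le_of_lt (Nat.sub_le _ _) ha) this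

lemma minZS_rep (h : G) {n : ℕ} (hn : 0 < n) (hh : addOrderOf h = n) :
    IsMinZS (Multiset.replicate n h) := by
  refine ⟨by intro he; have := congrArg Multiset.card he; simp at this; omega,
    by rw [Multiset.sum_replicate, ← hh]; exact addOrderOf_nsmul_eq_zero h, ?_⟩
  intro T hT hT0 hTS
  have hTrep : T = Multiset.replicate (Multiset.card T) h :=
    Multiset.eq_replicate_card.2 fun b hb =>
      Multiset.eq_of_mem_replicate (Multiset.mem_of_le hT hb)
  have hcle : Multiset.card T ≤ n := by simpa using Multiset.card_le_card hT
  have h0 : 0 < Multiset.card T := Multiset.card_pos.2 hT0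
  have hlt : Multiset.card T < n :=
    lt_of_le_of_ne hcle fun he => hTS (by rw [hTrep, he])
  rw [hTrep, Multiset.sum_replicate]
  exact nsmul_ne' hh h0 hlt

lemma atom_classify {g : G} {n : ℕ} (hg : addOrderOf g = n) (h2 : 2 < n) (B : Multiset G)
    (hB : IsMinZS B) (hmem : ∀ a ∈ B, a = g ∨ a = -g) :
    B = ({-g, g} : Multiset G) ∨ B = Multiset.replicate n g ∨
      B = Multiset.replicate n (-g) := by
  have hn0 : 0 < n := by omega
  have hne : g ≠ -g := by
    intro h
    have : (2 : ℕ) • g = 0 := by rw [two_nsmul]; nth_rewrite 2 [h]; simp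
    exact nsmul_ne' hg (by omega) h2 this
  obtain ⟨hB0, hBsum, hBmin⟩ := hB
  have hBd := decomp_two g (-g) hne B hmem
  set s := B.count g with hs
  set t := B.count (-g) with ht
  by_cases hs0 : s = 0
  · -- B = replicate t (-g)
    right; right
    have hBd' : B = Multiset.replicate t (-g) := by rw [hBd, hs0]; simp
    have ht0 : t ≠ 0 := by
      intro h; exact hB0 (by rw [hBd', h]; simp)
    have hts : t • g = 0 := by
      have := hBsum
      rw [hBd', Multiset.sum_replicate] at this
      have h2' : t • (-g) = -(t • g) := by simp
      rw [h2'] at this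
      simpa using this
    have hdvd : n ∣ t := by
      have := addOrderOf_dvd_of_nsmul_eq_zero hts; rwa [hg] at this
    have hnt : n ≤ t := Nat.le_of_dvd (Nat.pos_of_ne_zero ht0) hdvd
    rcases lt_or_eq_of_le hnt with hlt | heq
    · exfalso
      have hle : Multiset.replicate n (-g) ≤ B := by
        rw [hBd']; exact Multiset.replicate_le_replicate _ |>.2 (le_of_lt hlt)
      have hne2 : Multiset.replicate n (-g) ≠ B := by
        intro h
        have := congrArg Multiset.card h
        rw [hBd'] at this; simp at this; omega
      refine hBmin _ hle (by intro he; have := congrArg Multiset.card he; simp at this; omega) hne2 ?_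
      rw [Multiset.sum_replicate]
      have : n • (-g) = -(n • g) := by simp
      rw [this, ← hg, addOrderOf_nsmul_eq_zero g, neg_zero]
    · rw [hBd', ← heq]
  by_cases ht0 : t = 0
  · right; left
    have hBd' : B = Multiset.replicate s g := by rw [hBd, ht0]; simp
    have hts : s • g = 0 := by
      have := hBsum; rw [hBd', Multiset.sum_replicate] at this; exact this
    have hdvd : n ∣ s := by
      have := addOrderOf_dvd_of_nsmul_eq_zero hts; rwa [hg] at this
    have hns : n ≤ s := Nat.le_of_dvd (Nat.pos_of_ne_zero hs0) hdvd
    rcases lt_or_eq_of_le hns with hlt | heq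
    · exfalso
      have hle : Multiset.replicate n g ≤ B := by
        rw [hBd']; exact Multiset.replicate_le_replicate _ |>.2 (le_of_lt hlt)
      have hne2 : Multiset.replicate n g ≠ B := by
        intro h
        have := congrArg Multiset.card h
        rw [hBd'] at this; simp at this; omega
      refine hBmin _ hle (by intro he; have := congrArg Multiset.card he; simp at this; omega) hne2 ?_
      rw [Multiset.sum_replicate, ← hg]; exact addOrderOf_nsmul_eq_zero g
    · rw [hBd', ← heq]
  · left
    have hle : ({-g, g} : Multiset G) ≤ B := by
      rw [Multiset.insert_eq_cons, Multiset.le_iff_count]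
      intro a
      rw [Multiset.count_cons, Multiset.count_singleton]
      rcases eq_or_ne a g with rfl | h1
      · rw [if_pos rfl, if_neg hne]
        simp only [add_zero]
        exact Nat.one_le_iff_ne_zero.2 hs0
      rcases eq_or_ne a (-g) with rfl | h2
      · rw [if_neg h1, if_pos rfl]
        simp only [zero_add]
        exact Nat.one_le_iff_ne_zero.2 ht0
      · rw [if_neg h1, if_neg h2]
        simp
    by_contra hBne
    refine hBmin _ hle (by simp) (fun h => hBne h.symm) ?_
    simp

end

/-- `z` is a factorization of the zero-sum sequence `a` into minimal zero-sum
sequences. -/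
def IsFact {G : Type*} [AddCommGroup G] (a : Multiset G)
    (z : Multiset (Multiset G)) : Prop :=
  (∀ B ∈ z, IsMinZS B) ∧ z.sum = a

/-- The distance between two factorizations: cancel the common part and take the
maximum of the numbers of remaining atoms. -/
def fdist {G : Type*} [AddCommGroup G] [DecidableEq G]
    (z z' : Multiset (Multiset G)) : ℕ :=
  max (Multiset.card (z - z')) (Multiset.card (z' - z))

/-- The local tame degree `t(B(G), U)` of an atom `U`. -/
noncomputable def tLocal {G : Type*} [AddCommGroup G] [DecidableEq G]
    (U : Multiset G) : ℕ∞ :=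
  sInf { N : ℕ∞ | ∀ a : Multiset G, ∀ z, IsFact a z →
    (∃ y, IsFact a y ∧ U ∈ y) →
    ∃ z', IsFact a z' ∧ U ∈ z' ∧ (fdist z z' : ℕ∞) ≤ N }

/-- The tame degree `t(G) = t(B(G))`: the supremum of the local tame degrees over
all atoms. -/
noncomputable def tameDegree (G : Type*) [AddCommGroup G] [DecidableEq G] : ℕ∞ :=
  ⨆ U ∈ { U : Multiset G | IsMinZS U }, tLocal U


set_option maxHeartbeats 1000000 in
theorem stmt19 (G : Type*) [AddCommGroup G] [Fintype G] [DecidableEq G]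
    (n : ℕ) (hcard : Fintype.card G = n) (h5 : 5 ≤ n)
    (q m j : ℕ) (hq2 : 2 ≤ q) (hqn : q ≤ n - 2) (hcop : Nat.Coprime q n)
    (hm : 1 ≤ m) (hj1 : 1 ≤ j) (hjq : j ≤ q) (hnqm : n = q * m + j)
    (g : G) (hg : addOrderOf g = n) :
    IsMinZS (Multiset.replicate n (q • g)) ∧
    IsMinZS (Multiset.replicate n g) ∧
    IsMinZS ({-g, g} : Multiset G) ∧
    IsMinZS ((q • g) ::ₘ Multiset.replicate (n - q) g) ∧
    IsMinZS ((q • g) ::ₘ Multiset.replicate q (-g)) ∧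
    (Multiset.replicate (n - m) ((q • g) ::ₘ Multiset.replicate (n - q) g) +
        Multiset.replicate m ((q • g) ::ₘ Multiset.replicate q (-g))).sum =
      ((Multiset.replicate n (q • g)) ::ₘ
        (Multiset.replicate (q * m) ({-g, g} : Multiset G) +
          Multiset.replicate (n - q - m) (Multiset.replicate n g))).sum ∧
    fdist
      (Multiset.replicate (n - m) ((q • g) ::ₘ Multiset.replicate (n - q) g) +
        Multiset.replicate m ((q • g) ::ₘ Multiset.replicate q (-g)))
      ((Multiset.replicate n (q • g)) ::ₘ
        (Multiset.replicate (q * m) ({-g, g} : Multiset G) +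
          Multiset.replicate (n - q - m) (Multiset.replicate n g))) =
      n + (q - 1) * (m - 1) ∧
    ((n + (q - 1) * (m - 1) : ℕ) : ℕ∞) ≤ tameDegree G := by
  have hn0 : 0 < n := by omega
  have hq1 : 1 ≤ q := by omega
  have hqlt : q < n := by omega
  have horderqg : addOrderOf (q • g) = n := by
    rw [Nat.Coprime.addOrderOf_nsmul (by rw [hg]; exact hcop.symm)]; exact hg
  have key1 : (q - 1) * (m - 1) + q + m = q * m + 1 := by zify [hq1, hm]; ring
  have hqm_lt : q * m < n := hnqm ▸ Nat.lt_add_of_pos_right (by omega)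
  have hm_lt : m < n := lt_of_le_of_lt (Nat.le_mul_of_pos_left m (by omega)) hqm_lt
  have hm_le : m ≤ n := le_of_lt hm_lt
  have hq_le : q ≤ n := le_of_lt hqlt
  have hqm_le_n : q + m ≤ n := by
    have h1 : q + m ≤ q * m + 1 :=
      le_trans (Nat.le_add_left _ _) (by rw [← add_assoc]; exact le_of_eq key1)
    exact le_trans (le_trans h1 (by omega : q * m + 1 ≤ q * m + j)) (le_of_eq hnqm.symm)
  have hm_le_nq : m ≤ n - q := by omega
  have key2 : (n - m) * (n - q) = q * m + (n - q - m) * n := by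
    zify [hm_le, hq_le, hm_le_nq]; ring
  have hng : n • g = 0 := by rw [← hg]; exact addOrderOf_nsmul_eq_zero g
  have hg_ne0 : g ≠ 0 := by
    intro h; rw [h, addOrderOf_zero] at hg; omega
  have hqg_ne_g : q • g ≠ g := by
    intro h
    have : (q - 1) • g = 0 := by
      rw [sub_nsmul g hq1, h]; simp
    exact nsmul_ne' hg (by omega) (by omega) this
  have hqg_ne_ng : q • g ≠ -g := by
    intro h
    have : (q + 1) • g = 0 := by rw [add_nsmul, h]; simp
    exact nsmul_ne' hg (by omega) (by omega) this
  have hg_ne_ng : g ≠ -g := by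
    intro h
    have : (2 : ℕ) • g = 0 := by rw [two_nsmul]; nth_rewrite 2 [h]; simp
    exact nsmul_ne' hg (by omega) (by omega) this
  set U : Multiset G := Multiset.replicate n (q • g) with hU_def
  set U1 : Multiset G := ({-g, g} : Multiset G) with hU1_def
  set U0 : Multiset G := Multiset.replicate n g with hU0_def
  set V : Multiset G := (q • g) ::ₘ Multiset.replicate (n - q) g with hV_def
  set V' : Multiset G := (q • g) ::ₘ Multiset.replicate q (-g) with hV'_def
  set z : Multiset (Multiset G) :=
    Multiset.replicate (n - m) V + Multiset.replicate m V' with hz_def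
  set z' : Multiset (Multiset G) :=
    U ::ₘ (Multiset.replicate (q * m) U1 + Multiset.replicate (n - q - m) U0) with hz'_def
  -- minimality of atoms
  have hUmin : IsMinZS U := minZS_rep _ hn0 horderqg
  have hU0min : IsMinZS U0 := minZS_rep _ hn0 hg
  have hU1min : IsMinZS U1 := by
    rw [hU1_def]
    refine ⟨by simp, by simp, ?_⟩
    intro T hT hT0 hTS
    have hc2 : Multiset.card T ≤ 2 := by
      have := Multiset.card_le_card hT; simpa using this
    have hc1 : 0 < Multiset.card T := Multiset.card_pos.2 hT0
    rcases (by omega : Multiset.card T = 1 ∨ Multiset.card T = 2) with h1 | h2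
    · obtain ⟨a, rfl⟩ := Multiset.card_eq_one.1 h1
      have ha : a ∈ ({-g, g} : Multiset G) := Multiset.mem_of_le hT (Multiset.mem_singleton_self a)
      simp only [Multiset.insert_eq_cons, Multiset.mem_cons, Multiset.mem_singleton] at ha
      rcases ha with rfl | rfl
      · simpa using neg_ne_zero.2 hg_ne0
      · simpa using hg_ne0
    · exact absurd (Multiset.eq_of_le_of_card_le hT (by simp [h2])) hTS
  have hVmin : IsMinZS V := by
    rw [hV_def]
    refine ⟨Multiset.cons_ne_zero, ?_, ?_⟩
    · rw [Multiset.sum_cons, Multiset.sum_replicate, ← add_nsmul,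
        (by omega : q + (n - q) = n)]
      exact hng
    intro T hT hT0 hTS
    have hmemT : ∀ a ∈ T, a = q • g ∨ a = g := by
      intro a ha
      have := Multiset.mem_of_le hT ha
      rw [Multiset.mem_cons] at this
      rcases this with h | h
      · exact Or.inl h
      · exact Or.inr (Multiset.eq_of_mem_replicate h)
    have hTd := decomp_two _ _ hqg_ne_g T hmemT
    generalize hs_def : Multiset.count (q • g) T = s at hTd
    generalize ht_def : Multiset.count g T = t at hTd
    have hs1 : s ≤ 1 := by
      have h := Multiset.count_le_of_le (q • g) hT
      rw [Multiset.count_cons_self, Multiset.count_replicate,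
        if_neg (Ne.symm hqg_ne_g), hs_def] at h
      omega
    have ht1 : t ≤ n - q := by
      have h := Multiset.count_le_of_le g hT
      rwa [Multiset.count_cons_of_ne (Ne.symm hqg_ne_g), Multiset.count_replicate_self,
        ht_def] at h
    intro hsum
    have hsum' : s • (q • g) + t • g = 0 := by
      rw [hTd] at hsum
      simpa [Multiset.sum_add, Multiset.sum_replicate] using hsum
    have hTsum : (s * q + t) • g = 0 := by rw [add_nsmul, ← smul_smul]; exact hsum'
    have hdvd : n ∣ s * q + t := by
      have := addOrderOf_dvd_of_nsmul_eq_zero hTsum; rwa [hg] at this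
    have hpos : 0 < s * q + t := by
      rcases Nat.eq_zero_or_pos s with rfl | hsp
      · rcases Nat.eq_zero_or_pos t with rfl | htp
        · exact absurd (by rw [hTd]; simp) hT0
        · simpa
      · have : q ≤ s * q := Nat.le_mul_of_pos_left q hsp
        omega
    have hub : s * q + t ≤ n := by
      have hsq : s * q ≤ q := by
        rcases (by omega : s = 0 ∨ s = 1) with rfl | rfl <;> simp
      omega
    have heq : s * q + t = n := le_antisymm hub (Nat.le_of_dvd hpos hdvd)
    have hs1' : s = 1 := by
      rcases (by omega : s = 0 ∨ s = 1) with rfl | rfl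
      · simp at heq; omega
      · rfl
    have ht' : t = n - q := by rw [hs1'] at heq; omega
    exact hTS (by
      rw [hTd, hs1', ht']
      simp [Multiset.replicate_one, Multiset.singleton_add])
  have hV'min : IsMinZS V' := by
    rw [hV'_def]
    refine ⟨Multiset.cons_ne_zero, ?_, ?_⟩
    · rw [Multiset.sum_cons, Multiset.sum_replicate]
      have h1 : q • (-g) = -(q • g) := by simp
      rw [h1]; simp
    intro T hT hT0 hTS
    have hmemT : ∀ a ∈ T, a = q • g ∨ a = -g := by
      intro a ha
      have := Multiset.mem_of_le hT ha
      rw [Multiset.mem_cons] at this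
      rcases this with h | h
      · exact Or.inl h
      · exact Or.inr (Multiset.eq_of_mem_replicate h)
    have hTd := decomp_two _ _ hqg_ne_ng T hmemT
    generalize hs_def : Multiset.count (q • g) T = s at hTd
    generalize ht_def : Multiset.count (-g) T = t at hTd
    have hs1 : s ≤ 1 := by
      have h := Multiset.count_le_of_le (q • g) hT
      rw [Multiset.count_cons_self, Multiset.count_replicate,
        if_neg (Ne.symm hqg_ne_ng), hs_def] at h
      omega
    have ht1 : t ≤ q := by
      have h := Multiset.count_le_of_le (-g) hT
      rwa [Multiset.count_cons_of_ne (Ne.symm hqg_ne_ng), Multiset.count_replicate_self,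
        ht_def] at h
    intro hsum
    have hsum' : s • (q • g) + t • (-g) = 0 := by
      rw [hTd] at hsum
      simpa [Multiset.sum_add, Multiset.sum_replicate] using hsum
    have hsum'' : (s * q) • g = t • g := by
      have h1 : t • (-g) = -(t • g) := by simp
      rw [h1] at hsum'
      rw [← smul_smul]
      exact add_neg_eq_zero.1 hsum'
    have hsq : s * q ≤ q := by
      rcases (by omega : s = 0 ∨ s = 1) with rfl | rfl <;> simp
    have hst : s * q = t := smul_inj' hg (by omega) (by omega) hsum''
    rcases (by omega : s = 0 ∨ s = 1) with rfl | rfl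
    · have ht0' : t = 0 := by omega
      exact hT0 (by rw [hTd, ht0']; simp)
    · have ht0' : t = q := by omega
      exact hTS (by
        rw [hTd, ht0']
        simp [Multiset.replicate_one, Multiset.singleton_add])
  -- the product sequence
  set a0 : Multiset G := U + (Multiset.replicate ((n - m) * (n - q)) g +
    Multiset.replicate (m * q) (-g)) with ha0_def
  have hUsplit : U = Multiset.replicate (n - m) (q • g) + Multiset.replicate m (q • g) := by
    rw [hU_def, ← Multiset.replicate_add, (by omega : (n - m) + m = n)]
  have hzsum : z.sum = a0 := by
    rw [hz_def, Multiset.sum_add, Multiset.sum_replicate, Multiset.sum_replicate, hV_def, hV'_def,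
      Multiset.nsmul_cons, Multiset.nsmul_cons, Multiset.nsmul_singleton, Multiset.nsmul_singleton,
      Multiset.nsmul_replicate, Multiset.nsmul_replicate, ha0_def, hUsplit]
    abel
  have hz'sum : z'.sum = a0 := by
    rw [hz'_def, Multiset.sum_cons, Multiset.sum_add, Multiset.sum_replicate,
      Multiset.sum_replicate, hU1_def, Multiset.insert_eq_cons, Multiset.nsmul_cons,
      Multiset.nsmul_singleton, Multiset.nsmul_singleton, hU0_def, Multiset.nsmul_replicate,
      ha0_def, key2, Multiset.replicate_add, (by rw [mul_comm] : Multiset.replicate (m * q) (-g) =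
        Multiset.replicate (q * m) (-g))]
    abel
  -- cardinalities and distinctness
  have hcV : Multiset.card V = n - q + 1 := by rw [hV_def]; simp
  have hcV' : Multiset.card V' = q + 1 := by rw [hV'_def]; simp
  have hcU : Multiset.card U = n := by rw [hU_def]; simp
  have hcU1 : Multiset.card U1 = 2 := by rw [hU1_def]; simp
  have hcU0 : Multiset.card U0 = n := by rw [hU0_def]; simp
  have hdisj : ∀ B, B ∈ z → B ∈ z' → False := by
    intro B hBz hBz'
    rw [hz_def] at hBz
    rw [hz'_def] at hBz'
    simp only [Multiset.mem_add, Multiset.mem_replicate, Multiset.mem_cons] at hBz hBz'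
    have h1 : B = V ∨ B = V' := by tauto
    have h2 : B = U ∨ B = U1 ∨ B = U0 := by tauto
    rcases h1 with rfl | rfl <;> rcases h2 with h | h | h <;>
      · have := congrArg Multiset.card h
        simp only [hcV, hcV', hcU, hcU1, hcU0] at this
        omega
  have hsub1 : z - z' = z := by
    ext B
    rw [Multiset.count_sub]
    by_cases hB : B ∈ z
    · rw [Multiset.count_eq_zero.2 fun h => hdisj B hB h, Nat.sub_zero]
    · rw [Multiset.count_eq_zero.2 hB]; simp
  have hsub2 : z' - z = z' := by
    ext B
    rw [Multiset.count_sub]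
    by_cases hB : B ∈ z'
    · rw [Multiset.count_eq_zero.2 fun h => hdisj B h hB, Nat.sub_zero]
    · rw [Multiset.count_eq_zero.2 hB]; simp
  have hcz : Multiset.card z = n := by
    rw [hz_def]; simp only [Multiset.card_add, Multiset.card_replicate]; omega
  have hcz' : Multiset.card z' = n + (q - 1) * (m - 1) := by
    rw [hz'_def]
    simp only [Multiset.card_cons, Multiset.card_add, Multiset.card_replicate]
    have h := key1
    have h2 := hqm_le_n
    generalize hP : q * m = P at h ⊢
    generalize hA : (q - 1) * (m - 1) = A at h ⊢
    omega
  have hfd : fdist z z' = n + (q - 1) * (m - 1) := by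
    unfold fdist
    rw [hsub1, hsub2, hcz, hcz']
    exact max_eq_right (Nat.le_add_right _ _)
  -- factorizations
  have hzfact : IsFact a0 z := by
    refine ⟨?_, hzsum⟩
    intro B hB
    rw [hz_def] at hB
    simp only [Multiset.mem_add, Multiset.mem_replicate] at hB
    rcases hB with ⟨_, rfl⟩ | ⟨_, rfl⟩
    · exact hVmin
    · exact hV'min
  have hz'fact : IsFact a0 z' := by
    refine ⟨?_, hz'sum⟩
    intro B hB
    rw [hz'_def] at hB
    simp only [Multiset.mem_cons, Multiset.mem_add, Multiset.mem_replicate] at hB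
    rcases hB with rfl | ⟨_, rfl⟩ | ⟨_, rfl⟩
    · exact hUmin
    · exact hU1min
    · exact hU0min
  have hUz' : U ∈ z' := by rw [hz'_def]; exact Multiset.mem_cons_self _ _
  -- uniqueness of the factorization containing U
  have huniq : ∀ w, IsFact a0 w → U ∈ w → w = z' := by
    rintro w ⟨hwmin, hwsum⟩ hUw
    obtain ⟨w', rfl⟩ := Multiset.exists_cons_of_mem hUw
    have hws : w'.sum = Multiset.replicate ((n - m) * (n - q)) g +
        Multiset.replicate (m * q) (-g) := by
      have h1 : U + w'.sum = a0 := by rw [← Multiset.sum_cons]; exact hwsum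
      rw [ha0_def] at h1
      exact add_left_cancel h1
    have hmemw : ∀ B ∈ w', ∀ x ∈ B, x = g ∨ x = -g := by
      intro B hB x hx
      have : x ∈ w'.sum := Multiset.mem_of_le (Multiset.le_sum_of_mem hB) hx
      rw [hws] at this
      simp only [Multiset.mem_add, Multiset.mem_replicate] at this
      tauto
    have hclass : ∀ B ∈ w', B = U1 ∨ B = U0 ∨ B = Multiset.replicate n (-g) := by
      intro B hB
      have hmin := hwmin B (Multiset.mem_cons_of_mem hB)
      have h := atom_classify hg (by omega) B hmin (hmemw B hB)
      rw [← hU1_def, ← hU0_def] at h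
      exact h
    have hd1 : U1 ≠ U0 := fun h => by
      have := congrArg Multiset.card h; rw [hcU1, hcU0] at this; omega
    have hd2 : U1 ≠ Multiset.replicate n (-g) := fun h => by
      have := congrArg Multiset.card h; rw [hcU1] at this; simp at this; omega
    have hd3 : U0 ≠ Multiset.replicate n (-g) := fun h => by
      have hgm : g ∈ Multiset.replicate n (-g) := by
        rw [← h, hU0_def]; exact Multiset.mem_replicate.2 ⟨by omega, rfl⟩
      exact hg_ne_ng (Multiset.eq_of_mem_replicate hgm)
    have hwd := decomp_three U1 U0 (Multiset.replicate n (-g)) hd1 hd2 hd3 w' hclass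
    generalize hγ_def : Multiset.count U1 w' = γ at hwd
    generalize hα_def : Multiset.count U0 w' = α at hwd
    generalize hβ_def : Multiset.count (Multiset.replicate n (-g)) w' = β at hwd
    have hsum2 : w'.sum = Multiset.replicate γ (-g) + Multiset.replicate γ g +
        Multiset.replicate (α * n) g + Multiset.replicate (β * n) (-g) := by
      rw [hwd, Multiset.sum_add, Multiset.sum_add, Multiset.sum_replicate,
        Multiset.sum_replicate, Multiset.sum_replicate, hU1_def, Multiset.insert_eq_cons,
        Multiset.nsmul_cons, Multiset.nsmul_singleton, Multiset.nsmul_singleton, hU0_def,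
        Multiset.nsmul_replicate, Multiset.nsmul_replicate]
    have hcg : γ + α * n = (n - m) * (n - q) := by
      have h := congrArg (Multiset.count g) (hsum2.symm.trans hws)
      simp [Multiset.count_add, Multiset.count_replicate, hg_ne_ng, Ne.symm hg_ne_ng] at h
      linarith [h]
    have hcng : γ + β * n = m * q := by
      have h := congrArg (Multiset.count (-g)) (hsum2.symm.trans hws)
      simp [Multiset.count_add, Multiset.count_replicate, hg_ne_ng, Ne.symm hg_ne_ng] at h
      linarith [h]
    have hmq_lt : m * q < n := by rw [mul_comm]; exact hqm_lt
    have hβ0 : β = 0 := by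
      by_contra hβ0
      have hn_le : n ≤ β * n := Nat.le_mul_of_pos_left n (Nat.pos_of_ne_zero hβ0)
      generalize hBN : β * n = BN at hn_le hcng
      generalize hMQ : m * q = MQ at hcng hmq_lt
      omega
    have hγval : γ = m * q := by rw [hβ0] at hcng; simpa using hcng
    have hαval : α = n - q - m := by
      have hαn : α * n = (n - q - m) * n := by
        rw [hγval, key2] at hcg
        have hcg' := hcg
        rw [mul_comm m q] at hcg'
        omega
      exact Nat.eq_of_mul_eq_mul_right hn0 hαn
    rw [hz'_def]
    congr 1
    rw [hwd, hβ0, hγval, hαval, mul_comm m q]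
    simp
  -- tame degree bound
  have hlocal : ((n + (q - 1) * (m - 1) : ℕ) : ℕ∞) ≤ tLocal U := by
    apply le_sInf
    intro N hN
    obtain ⟨z'', hz''fact, hz''mem, hz''d⟩ := hN a0 z hzfact ⟨z', hz'fact, hUz'⟩
    rw [huniq z'' hz''fact hz''mem, hfd] at hz''d
    exact hz''d
  refine ⟨hUmin, hU0min, hU1min, hVmin, hV'min, hzsum.trans hz'sum.symm, hfd, hlocal.trans ?_⟩
  unfold tameDegree
  exact le_iSup₂ (f := fun (W : Multiset G) (_ : W ∈ {W : Multiset G | IsMinZS W}) => tLocal W)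
    U hUmin
end
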